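/- arXiv:2507.21733 — 7 statements merged into one kernel-verified Lean document; each statement's English description precedes it below -/
import Mathlib

section
/- For every real number λ in the interval [-1, 1], there exist a finite connected bipartite graph and a reversible stochastic transition matrix P associated with positive edge conductances on that graph such that λ is an eigenvalue of P. -/
/-!
On the 4-cycle with conductances alternating `p, q` around the cycle, the vector `(1, -1, -1, 1)`
is an eigenvector of `P` with eigenvalue `(q - p) / (p + q)`; taking `p = 1 - λ`, `q = 1 + λ`
realises every `λ ∈ (-1, 1)`. The endpoints are eigenvalues of every connected bipartite chain,
with eigenvectors the constants and the sign of a 2-colouring; they are simple eigenvalues, so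
the family above cannot reach them.
-/

open SimpleGraph

noncomputable def transitionOp {V : Type*} [Fintype V] (a : V → V → ℝ) (f : V → ℝ) (x : V) :
    ℝ :=
  ∑ y, (a x y / ∑ y', a x y') * f y

section

variable {V : Type*} [Fintype V] {a : V → V → ℝ}

lemma transitionOp_const (hm : ∀ x, ∑ y, a x y ≠ 0) (c : ℝ) (x : V) :
    transitionOp a (fun _ => c) x = 1 * c := by
  rw [transitionOp, ← Finset.sum_mul, ← Finset.sum_div, div_self (hm x)]

lemma transitionOp_coloring_sign {G : SimpleGraph V} (C : G.Coloring Bool)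
    (ha : ∀ x y, ¬ G.Adj x y → a x y = 0) (hm : ∀ x, ∑ y, a x y ≠ 0) (x : V) :
    transitionOp a (fun v => if C v then 1 else -1) x = -1 * (if C x then 1 else -1) := by
  have hterm : ∀ y, (a x y / ∑ y', a x y') * (if C y then 1 else -1)
      = -((a x y / ∑ y', a x y') * (if C x then 1 else -1)) := by
    intro y
    by_cases hxy : G.Adj x y
    · have := C.valid hxy
      cases hx : C x <;> cases hy : C y <;> simp_all
    · simp [ha x y hxy]
  rw [transitionOp, Finset.sum_congr rfl fun y _ => hterm y, Finset.sum_neg_distrib,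
    ← Finset.sum_mul, ← Finset.sum_div, div_self (hm x)]
  ring

end

def cycleConductance (p q : ℝ) : Fin 4 → Fin 4 → ℝ :=
  ![![0, p, 0, q], ![p, 0, q, 0], ![0, q, 0, p], ![q, 0, p, 0]]

section

variable {p q : ℝ}

lemma cycleConductance_symm (x y : Fin 4) :
    cycleConductance p q x y = cycleConductance p q y x := by
  fin_cases x <;> fin_cases y <;> rfl

lemma cycleConductance_pos_iff (hp : 0 < p) (hq : 0 < q) (x y : Fin 4) :
    0 < cycleConductance p q x y ↔ (cycleGraph 4).Adj x y := by
  fin_cases x <;> fin_cases y <;> simp [cycleConductance, hp, hq] <;> decide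

lemma cycleConductance_eq_zero (x y : Fin 4) (h : ¬ (cycleGraph 4).Adj x y) :
    cycleConductance p q x y = 0 := by
  fin_cases x <;> fin_cases y <;> first | rfl | exact absurd (by decide) h

lemma sum_cycleConductance (x : Fin 4) : ∑ y, cycleConductance p q x y = p + q := by
  fin_cases x <;> simp [cycleConductance, Fin.sum_univ_four] <;> ring

lemma transitionOp_cycleConductance (hpq : p + q ≠ 0) (x : Fin 4) :
    transitionOp (cycleConductance p q) ![1, -1, -1, 1] x
      = (q - p) / (p + q) * ![1, -1, -1, 1] x := by
  simp only [transitionOp, sum_cycleConductance]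
  fin_cases x <;> simp [cycleConductance, Fin.sum_univ_four] <;> field_simp <;> ring

end

lemma exists_eigenvector_of_cycleConductance (lam : ℝ) {p q : ℝ} (hp : 0 < p) (hq : 0 < q)
    {f : Fin 4 → ℝ} (hf : f ≠ 0)
    (heig : ∀ x, transitionOp (cycleConductance p q) f x = lam * f x) :
    ∃ (n : ℕ) (G : SimpleGraph (Fin n)) (a : Fin n → Fin n → ℝ),
      G.Connected ∧ G.Colorable 2 ∧
      (∀ x y, a x y = a y x) ∧
      (∀ x y, 0 < a x y ↔ G.Adj x y) ∧
      (∀ x y, ¬ G.Adj x y → a x y = 0) ∧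
      ∃ f : Fin n → ℝ, f ≠ 0 ∧
        ∀ x, ∑ y, (a x y / ∑ y', a x y') * f y = lam * f x :=
  ⟨4, cycleGraph 4, cycleConductance p q, cycleGraph_connected,
    (cycleGraph.bicoloring_of_even 4 (by decide)).colorable, cycleConductance_symm,
    cycleConductance_pos_iff hp hq, cycleConductance_eq_zero, f, hf, heig⟩

/-- For every real `λ ∈ [-1,1]` there are a finite connected bipartite graph and a
reversible stochastic transition matrix `P` coming from positive edge conductances
on that graph, such that `λ` is an eigenvalue of `P`. -/
theorem stmt0 (lam : ℝ) (hlam : lam ∈ Set.Icc (-1 : ℝ) 1) :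
    ∃ (n : ℕ) (G : SimpleGraph (Fin n)) (a : Fin n → Fin n → ℝ),
      G.Connected ∧ G.Colorable 2 ∧
      (∀ x y, a x y = a y x) ∧
      (∀ x y, 0 < a x y ↔ G.Adj x y) ∧
      (∀ x y, ¬ G.Adj x y → a x y = 0) ∧
      ∃ f : Fin n → ℝ, f ≠ 0 ∧
        ∀ x, ∑ y, (a x y / ∑ y', a x y') * f y = lam * f x := by
  have hm : ∀ x, ∑ y, cycleConductance 1 1 x y ≠ 0 := by simp [sum_cycleConductance]
  obtain ⟨hl, hr⟩ := hlam
  rcases hr.eq_or_lt with rfl | hr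
  · exact exists_eigenvector_of_cycleConductance 1 one_pos one_pos
      (Function.ne_iff.mpr ⟨0, one_ne_zero⟩) (transitionOp_const hm 1)
  rcases hl.eq_or_lt with rfl | hl
  · exact exists_eigenvector_of_cycleConductance (-1) one_pos one_pos
      (Function.ne_iff.mpr ⟨0, by split_ifs <;> norm_num⟩)
      (transitionOp_coloring_sign (cycleGraph.bicoloring_of_even 4 (by decide))
        cycleConductance_eq_zero hm)
  · have heig := transitionOp_cycleConductance (p := 1 - lam) (q := 1 + lam) (by norm_num)
    rw [show (1 + lam - (1 - lam)) / (1 - lam + (1 + lam)) = lam by ring] at heig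
    exact exists_eigenvector_of_cycleConductance lam (by linarith) (by linarith)
      (Function.ne_iff.mpr ⟨0, by simp⟩) heig
end

section
/- Let λ be an eigenvalue of a finite real symmetric (or symmetrizable reversible) matrix Q on V with eigenspace N(λ) of dimension ν ≥ 1, and let γ be an involution-like automorphism of the underlying weighted graph exchanging two vertices a and b (γ has finite even order r, preserves the matrix: q(γu, γv) = q(u,v)). Then N(λ) admits a basis f_1, ..., f_ν such that one of the following holds: (I) f_j(a) = f_j(b) = 0 for all j; (II) f_j(a) = f_j(b) = 0 for j ≤ ν−1 and f_ν(a) = f_ν(b) = 1 with f_ν ∘ γ = f_ν; (III) f_j(a) = f_j(b) = 0 for j ≤ ν−1 and f_ν(a) = −f_ν(b) = 1 with f_ν ∘ γ = −f_ν; (IV) f_j(a) = f_j(b) = 0 for j ≤ ν−2, f_ν(a) = f_{ν−1}(b) = 1, f_ν(b) = f_{ν−1}(a) = 0, f_ν ∘ γ = f_{ν−1} and f_{ν−1} ∘ γ = f_ν. -/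
/-!
Evaluation at `a` and `b` maps the eigenspace `N` onto a subspace of `ℝ²` of dimension 0, 1
or 2, and a basis of its kernel extended by preimages of a basis of the image is a basis of `N`.
As `N` is stable under `f ↦ f ∘ γ`, averaging over the powers of `γ²`, which fix `a` and `b`,
turns any preimage `f` into one with `g ∘ γ² = g`. In dimension 1 a normalised `g ± g ∘ γ` is
even or odd under `γ` (types II and III); in dimension 2 the preimage `g` of `(1, 0)` and
`g ∘ γ` give type IV.
-/

open Module Submodule Matrix

theorem Finset.sum_range_add_one_eq_of_eq {M : Type*} [AddCancelCommMonoid M] {F : ℕ → M} {n : ℕ}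
    (h : F n = F 0) : ∑ k ∈ range n, F (k + 1) = ∑ k ∈ range n, F k := by
  have := (sum_range_succ' F n).symm.trans (sum_range_succ F n)
  rwa [h, add_left_inj] at this

theorem LinearIndependent.fin_append_of_map_eq_zero {R M W : Type*} [Ring R] [AddCommGroup M]
    [Module R M] [AddCommGroup W] [Module R W] {d k : ℕ} {v : Fin d → M} {u : Fin k → M}
    (φ : M →ₗ[R] W) (hv : LinearIndependent R v) (hφv : ∀ i, φ (v i) = 0)
    (hu : LinearIndependent R (φ ∘ u)) : LinearIndependent R (Fin.append v u) := by
  rw [Fintype.linearIndependent_iff] at hv hu ⊢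
  intro c hc
  rw [Fin.sum_univ_add] at hc
  simp only [Fin.append_left, Fin.append_right] at hc
  have hcu : ∀ j, c (Fin.natAdd d j) = 0 := hu _ (by simpa [hφv] using congrArg φ hc)
  have hcv : ∀ i, c (Fin.castAdd k i) = 0 := hv _ (by simpa [hcu] using hc)
  exact fun i => Fin.addCases hcv hcu i

section FinAppendBasis

variable {K M W : Type*} [Field K] [AddCommGroup M] [Module K M] [AddCommGroup W] [Module K W]

theorem Submodule.span_range_eq_of_linearIndependent {ι : Type*} [Fintype ι] {N : Submodule K M}
    [FiniteDimensional K N] {f : ι → M} (hf : LinearIndependent K f) (hfN : ∀ i, f i ∈ N)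
    (hcard : Fintype.card ι = finrank K N) : span K (Set.range f) = N :=
  eq_of_le_of_finrank_le (span_le.2 (Set.range_subset_iff.2 hfN))
    (by rw [finrank_span_eq_card hf, hcard])

theorem Submodule.exists_fin_append_basis (φ : M →ₗ[K] W) (N : Submodule K M)
    [FiniteDimensional K N] {d k : ℕ} (hd : finrank K (φ.domRestrict N).ker = d)
    (hk : finrank K N = d + k) (u : Fin k → M) (huN : ∀ j, u j ∈ N)
    (hu : LinearIndependent K (φ ∘ u)) :
    ∃ f : Fin (d + k) → M, LinearIndependent K f ∧ (∀ i, f i ∈ N) ∧ span K (Set.range f) = N ∧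
      (∀ i : Fin (d + k), (i : ℕ) < d → φ (f i) = 0) ∧ ∀ j, f (Fin.natAdd d j) = u j := by
  let B := finBasisOfFinrankEq K (φ.domRestrict N).ker hd
  let v i : M := B i
  have hvN i : v i ∈ N := (B i : N).2
  have hφv i : φ (v i) = 0 := (B i).2
  have hv : LinearIndependent K v :=
    (B.linearIndependent.map' _ (ker_subtype _)).map' N.subtype (ker_subtype _)
  have hli := hv.fin_append_of_map_eq_zero φ hφv hu
  have hmem : ∀ i, Fin.append v u i ∈ N :=
    Fin.addCases (fun i => by rw [Fin.append_left]; exact hvN i)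
      (fun j => by rw [Fin.append_right]; exact huN j)
  refine ⟨Fin.append v u, hli, hmem,
    span_range_eq_of_linearIndependent hli hmem (by rw [Fintype.card_fin, hk]),
    fun i hi => ?_, Fin.append_right v u⟩
  rw [show i = Fin.castAdd k ⟨i, hi⟩ from rfl, Fin.append_left]
  exact hφv _

end FinAppendBasis

def evalPair (K : Type*) {V : Type*} [CommSemiring K] (a b : V) : (V → K) →ₗ[K] K × K :=
  (LinearMap.proj a).prod (LinearMap.proj b)

@[simp]
theorem evalPair_apply {K V : Type*} [CommSemiring K] (a b : V) (f : V → K) :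
    evalPair K a b f = (f a, f b) :=
  rfl

theorem Submodule.exists_basis_forall_evalPair_eq_zero {K V : Type*} [Field K]
    {N : Submodule K (V → K)} [FiniteDimensional K N] {a b : V} {d : ℕ}
    (hd : finrank K ((evalPair K a b).domRestrict N).ker = d) (hdim : finrank K N = d) :
    ∃ f : Fin d → (V → K), LinearIndependent K f ∧ (∀ i, f i ∈ N) ∧
      span K (Set.range f) = N ∧ ∀ i, f i a = 0 ∧ f i b = 0 := by
  obtain ⟨f, hli, hfN, hspan, hf0, -⟩ := N.exists_fin_append_basis (evalPair K a b) (k := 0) hd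
    hdim Fin.elim0 Fin.rec0 linearIndependent_empty_type
  exact ⟨f, hli, hfN, hspan, fun i => by simpa using hf0 i i.2⟩

theorem linearIndependent_evalPair_comp_swap {K V : Type*} [CommRing K] {γ : Equiv.Perm V}
    {a b : V} (hγa : γ a = b) (hγb : γ b = a) {g : V → K} (hga : g a = 1) (hgb : g b = 0) :
    LinearIndependent K (evalPair K a b ∘ ![g ∘ γ, g]) := by
  rw [show evalPair K a b ∘ ![g ∘ γ, g] = ![(0, 1), (1, 0)] by
    ext j : 1; fin_cases j <;> simp [hγa, hγb, hga, hgb]]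
  rw [LinearIndependent.pair_iff]
  intro s t hst
  simpa [and_comm] using hst

section SwapInvariant

variable {K V : Type*} [Field K] [CharZero K] [Finite V] {N : Submodule K (V → K)}

theorem Submodule.exists_mem_comp_perm_eq_self {σ : Equiv.Perm V}
    (hN : ∀ f ∈ N, f ∘ σ ∈ N) {f : V → K} (hf : f ∈ N) :
    ∃ g ∈ N, g ∘ σ = g ∧ ∀ x, σ x = x → g x = f x := by
  have hpow : ∀ k, f ∘ ⇑(σ ^ k) ∈ N := by
    intro k
    induction k with
    | zero => simpa using hf
    | succ k ih => simpa [pow_succ, ← Function.comp_assoc] using hN _ ih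
  set n := orderOf σ
  have hn : (n : K) ≠ 0 := Nat.cast_ne_zero.2 (orderOf_pos σ).ne'
  refine ⟨(n : K)⁻¹ • ∑ k ∈ Finset.range n, f ∘ ⇑(σ ^ k),
    N.smul_mem _ (N.sum_mem fun k _ => hpow k), ?_, fun x hx => ?_⟩
  · ext x
    simp only [Function.comp_apply, Pi.smul_apply, Finset.sum_apply, ← Equiv.Perm.mul_apply,
      ← pow_succ]
    rw [Finset.sum_range_add_one_eq_of_eq (F := fun k => f ((σ ^ k) x))
      (by simp [n, pow_orderOf_eq_one])]
  · simp [Equiv.Perm.pow_apply_eq_self_of_apply_eq_self hx, hn]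

variable {γ : Equiv.Perm V} (hN : ∀ f ∈ N, f ∘ γ ∈ N) {a b : V} (hγa : γ a = b) (hγb : γ b = a)
include hN hγa hγb

theorem Submodule.exists_mem_comp_swap_sq_eq_self {f : V → K} (hf : f ∈ N) :
    ∃ g ∈ N, (∀ x, g (γ (γ x)) = g x) ∧ g a = f a ∧ g b = f b := by
  obtain ⟨g, hgN, hgγ, hgfix⟩ := N.exists_mem_comp_perm_eq_self (σ := γ * γ)
    (fun f hf => by simpa [Function.comp_assoc] using hN _ (hN f hf)) hf
  exact ⟨g, hgN, congrFun hgγ, hgfix a (by simp [hγa, hγb]), hgfix b (by simp [hγa, hγb])⟩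

theorem Submodule.exists_mem_comp_swap_eq_smul {ε : K} (hε : ε * ε = 1) {f : V → K}
    (hf : f ∈ N) (hfab : f a + ε * f b ≠ 0) :
    ∃ w ∈ N, w a = 1 ∧ w b = ε ∧ w ∘ γ = ε • w := by
  obtain ⟨g, hgN, hgγγ, hga, hgb⟩ := N.exists_mem_comp_swap_sq_eq_self hN hγa hγb hf
  refine ⟨(f a + ε * f b)⁻¹ • (g + ε • (g ∘ γ)),
    N.smul_mem _ (N.add_mem hgN (N.smul_mem _ (hN g hgN))), ?_, ?_, ?_⟩
  · simp [hγa, hga, hgb, hfab]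
  · simp only [Pi.smul_apply, Pi.add_apply, Function.comp_apply, hγb, hga, hgb, smul_eq_mul]
    rw [inv_mul_eq_iff_eq_mul₀ hfab]
    linear_combination (-f b) * hε
  · ext x
    simp only [Function.comp_apply, Pi.smul_apply, Pi.add_apply, hgγγ, smul_eq_mul]
    linear_combination -((f a + ε * f b)⁻¹ * g (γ x)) * hε

theorem Submodule.exists_mem_comp_swap_eq_sign_smul {f : V → K} (hf : f ∈ N)
    (hfab : evalPair K a b f ≠ 0) :
    ∃ ε : K, (ε = 1 ∨ ε = -1) ∧ ∃ w ∈ N, w a = 1 ∧ w b = ε ∧ w ∘ γ = ε • w := by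
  by_cases hs : f a + f b = 0
  · refine ⟨-1, .inr rfl, N.exists_mem_comp_swap_eq_smul hN hγa hγb (by norm_num) hf ?_⟩
    intro hd
    have hfa : f a = 0 := by
      simpa using (by linear_combination hs + hd : (2 : K) * f a = 0)
    exact hfab (by simp [hfa, show f b = 0 by linear_combination hs - hfa])
  · exact ⟨1, .inl rfl, N.exists_mem_comp_swap_eq_smul hN hγa hγb (by norm_num) hf
      (by simpa using hs)⟩

theorem Submodule.exists_basis_comp_swap_eq_sign_smul {d : ℕ}
    (hd : finrank K ((evalPair K a b).domRestrict N).ker = d) (hdim : finrank K N = d + 1)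
    {f₀ : V → K} (hf₀ : f₀ ∈ N) (hf₀ab : evalPair K a b f₀ ≠ 0) :
    ∃ f : Fin (d + 1) → (V → K), LinearIndependent K f ∧ (∀ i, f i ∈ N) ∧
      span K (Set.range f) = N ∧
      (((∀ i : Fin (d + 1), (i : ℕ) + 1 < d + 1 → f i a = 0 ∧ f i b = 0) ∧
          f (Fin.last d) a = 1 ∧ f (Fin.last d) b = 1 ∧
          ∀ v, f (Fin.last d) (γ v) = f (Fin.last d) v)
        ∨ ((∀ i : Fin (d + 1), (i : ℕ) + 1 < d + 1 → f i a = 0 ∧ f i b = 0) ∧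
          f (Fin.last d) a = 1 ∧ f (Fin.last d) b = -1 ∧
          ∀ v, f (Fin.last d) (γ v) = - f (Fin.last d) v)) := by
  obtain ⟨ε, hε, w, hwN, hwa, hwb, hwγ⟩ := N.exists_mem_comp_swap_eq_sign_smul hN hγa hγb hf₀ hf₀ab
  obtain ⟨f, hli, hfN, hspan, hf0, hfw⟩ := N.exists_fin_append_basis (evalPair K a b) hd hdim
    ![w] (by simpa) (by rw [linearIndependent_unique_iff]; simp [hwa])
  have hlast : f (Fin.last d) = w := hfw 0
  have hzero (i : Fin (d + 1)) (hi : (i : ℕ) + 1 < d + 1) : f i a = 0 ∧ f i b = 0 := by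
    simpa using hf0 i (by omega)
  refine ⟨f, hli, hfN, hspan, ?_⟩
  rw [hlast]
  rcases hε with rfl | rfl
  · exact .inl ⟨hzero, hwa, hwb, fun x => by simpa using congrFun hwγ x⟩
  · exact .inr ⟨hzero, hwa, hwb, fun x => by simpa using congrFun hwγ x⟩

theorem Submodule.exists_basis_comp_swap_eq_swap {d : ℕ}
    (hd : finrank K ((evalPair K a b).domRestrict N).ker = d) (hdim : finrank K N = d + 2)
    {f₀ : V → K} (hf₀ : f₀ ∈ N) (hf₀a : f₀ a = 1) (hf₀b : f₀ b = 0) :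
    ∃ f : Fin (d + 2) → (V → K), LinearIndependent K f ∧ (∀ i, f i ∈ N) ∧
      span K (Set.range f) = N ∧
      ((∀ i : Fin (d + 2), (i : ℕ) + 2 < d + 2 → f i a = 0 ∧ f i b = 0) ∧
        f (Fin.last (d + 1)) a = 1 ∧ f (Fin.last (d + 1)) b = 0 ∧
        f ⟨d, by omega⟩ b = 1 ∧ f ⟨d, by omega⟩ a = 0 ∧
        (∀ v, f (Fin.last (d + 1)) (γ v) = f ⟨d, by omega⟩ v) ∧
        (∀ v, f ⟨d, by omega⟩ (γ v) = f (Fin.last (d + 1)) v)) := by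
  obtain ⟨g, hgN, hgγγ, hga, hgb⟩ := N.exists_mem_comp_swap_sq_eq_self hN hγa hγb hf₀
  rw [hf₀a] at hga
  rw [hf₀b] at hgb
  obtain ⟨f, hli, hfN, hspan, hf0, hfg⟩ := N.exists_fin_append_basis (evalPair K a b) hd hdim
    ![g ∘ γ, g] (Fin.forall_fin_two.2 ⟨hN g hgN, hgN⟩)
    (linearIndependent_evalPair_comp_swap hγa hγb hga hgb)
  have hlast : f (Fin.last (d + 1)) = g := hfg 1
  have hprev : f ⟨d, by omega⟩ = g ∘ γ := hfg 0
  refine ⟨f, hli, hfN, hspan, ?_⟩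
  rw [hlast, hprev]
  exact ⟨fun i hi => by simpa using hf0 i (by omega), hga, hgb, by simp [hγb, hga],
    by simp [hγa, hgb], fun _ => rfl, hgγγ⟩

end SwapInvariant

theorem Submodule.exists_basis_normalForm_of_swap {K V : Type*} [Field K] [CharZero K] [Finite V]
    (N : Submodule K (V → K)) {γ : Equiv.Perm V} (hN : ∀ f ∈ N, f ∘ γ ∈ N) {a b : V}
    (hγa : γ a = b) (hγb : γ b = a) {ν : ℕ} (hν : 1 ≤ ν) (hdim : finrank K N = ν) :
    ∃ f : Fin ν → (V → K), LinearIndependent K f ∧ (∀ i, f i ∈ N) ∧ span K (Set.range f) = N ∧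
      ((∀ i, f i a = 0 ∧ f i b = 0)
        ∨ ((∀ i : Fin ν, (i : ℕ) + 1 < ν → f i a = 0 ∧ f i b = 0) ∧
            f ⟨ν - 1, by omega⟩ a = 1 ∧ f ⟨ν - 1, by omega⟩ b = 1 ∧
            (∀ v, f ⟨ν - 1, by omega⟩ (γ v) = f ⟨ν - 1, by omega⟩ v))
        ∨ ((∀ i : Fin ν, (i : ℕ) + 1 < ν → f i a = 0 ∧ f i b = 0) ∧
            f ⟨ν - 1, by omega⟩ a = 1 ∧ f ⟨ν - 1, by omega⟩ b = -1 ∧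
            (∀ v, f ⟨ν - 1, by omega⟩ (γ v) = - f ⟨ν - 1, by omega⟩ v))
        ∨ ((∀ i : Fin ν, (i : ℕ) + 2 < ν → f i a = 0 ∧ f i b = 0) ∧
            f ⟨ν - 1, by omega⟩ a = 1 ∧ f ⟨ν - 1, by omega⟩ b = 0 ∧
            f ⟨ν - 2, by omega⟩ b = 1 ∧ f ⟨ν - 2, by omega⟩ a = 0 ∧
            (∀ v, f ⟨ν - 1, by omega⟩ (γ v) = f ⟨ν - 2, by omega⟩ v) ∧
            (∀ v, f ⟨ν - 2, by omega⟩ (γ v) = f ⟨ν - 1, by omega⟩ v))) := by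
  set ψ := (evalPair K a b).domRestrict N
  obtain ⟨d, hd⟩ : ∃ d, finrank K ψ.ker = d := ⟨_, rfl⟩
  have hrank : finrank K ψ.range + d = ν := hd ▸ hdim ▸ ψ.finrank_range_add_finrank_ker
  have hle : finrank K ψ.range ≤ 2 := (finrank_le _).trans (by simp)
  obtain h0 | h1 | h2 : finrank K ψ.range = 0 ∨ finrank K ψ.range = 1 ∨ finrank K ψ.range = 2 := by
    omega
  · obtain rfl : d = ν := by omega
    obtain ⟨f, hli, hfN, hspan, hzero⟩ := N.exists_basis_forall_evalPair_eq_zero hd hdim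
    exact ⟨f, hli, hfN, hspan, .inl hzero⟩
  · obtain rfl : ν = d + 1 := by omega
    obtain ⟨_, hy, hy0⟩ := exists_mem_ne_zero_of_ne_bot (p := ψ.range) fun h => by
      rw [h, finrank_bot] at h1; exact zero_ne_one h1
    obtain ⟨f₀, rfl⟩ := LinearMap.mem_range.1 hy
    obtain ⟨f, hli, hfN, hspan, hcase⟩ :=
      N.exists_basis_comp_swap_eq_sign_smul hN hγa hγb hd hdim f₀.2 hy0
    exact ⟨f, hli, hfN, hspan, .inr (hcase.imp id .inl)⟩
  · obtain rfl : ν = d + 2 := by omega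
    obtain ⟨f₀, hf₀⟩ : ((1 : K), (0 : K)) ∈ ψ.range := by
      rw [eq_top_of_finrank_eq (S := ψ.range) (by simp [h2])]; trivial
    obtain ⟨f, hli, hfN, hspan, hcase⟩ := N.exists_basis_comp_swap_eq_swap hN hγa hγb hd hdim
      f₀.2 (congrArg Prod.fst hf₀) (congrArg Prod.snd hf₀)
    exact ⟨f, hli, hfN, hspan, .inr (.inr (.inr hcase))⟩

theorem Matrix.comp_mem_eigenspace_toLin' {R n : Type*} [CommRing R] [Fintype n] [DecidableEq n]
    {Q : Matrix n n R} {σ : Equiv.Perm n} (hσ : ∀ u v, Q (σ u) (σ v) = Q u v) {μ : R}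
    {f : n → R} (hf : f ∈ End.eigenspace (toLin' Q) μ) :
    f ∘ σ ∈ End.eigenspace (toLin' Q) μ := by
  rw [End.mem_eigenspace_iff, toLin'_apply] at hf ⊢
  have hQ : Q.submatrix σ σ = Q := Matrix.ext hσ
  calc Q *ᵥ (f ∘ σ) = Q.submatrix σ σ *ᵥ (f ∘ σ) := by rw [hQ]
    _ = (μ • f) ∘ σ := by rw [submatrix_mulVec_equiv, Function.comp_assoc,
          Equiv.self_comp_symm, Function.comp_id, hf]
    _ = μ • (f ∘ σ) := rfl

theorem stmt8 {V : Type*} [Fintype V] [DecidableEq V]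
    (Q : Matrix V V ℝ)
    (a b : V)
    (γ : Equiv.Perm V) (hγQ : ∀ u v, Q (γ u) (γ v) = Q u v)
    (hγa : γ a = b) (hγb : γ b = a)
    (lam : ℝ) (ν : ℕ) (hν : 1 ≤ ν)
    (hdim : Module.finrank ℝ
        ↥(Module.End.eigenspace (Matrix.toLin' Q) lam) = ν) :
    ∃ f : Fin ν → (V → ℝ),
      LinearIndependent ℝ f ∧
      (∀ i, Q.mulVec (f i) = lam • f i) ∧
      Submodule.span ℝ (Set.range f)
        = Module.End.eigenspace (Matrix.toLin' Q) lam ∧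
      ((∀ i, f i a = 0 ∧ f i b = 0)
        ∨ ((∀ i : Fin ν, (i : ℕ) + 1 < ν → f i a = 0 ∧ f i b = 0) ∧
            f ⟨ν - 1, by omega⟩ a = 1 ∧ f ⟨ν - 1, by omega⟩ b = 1 ∧
            (∀ v, f ⟨ν - 1, by omega⟩ (γ v) = f ⟨ν - 1, by omega⟩ v))
        ∨ ((∀ i : Fin ν, (i : ℕ) + 1 < ν → f i a = 0 ∧ f i b = 0) ∧
            f ⟨ν - 1, by omega⟩ a = 1 ∧ f ⟨ν - 1, by omega⟩ b = -1 ∧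
            (∀ v, f ⟨ν - 1, by omega⟩ (γ v) = - f ⟨ν - 1, by omega⟩ v))
        ∨ ((∀ i : Fin ν, (i : ℕ) + 2 < ν → f i a = 0 ∧ f i b = 0) ∧
            f ⟨ν - 1, by omega⟩ a = 1 ∧ f ⟨ν - 1, by omega⟩ b = 0 ∧
            f ⟨ν - 2, by omega⟩ b = 1 ∧ f ⟨ν - 2, by omega⟩ a = 0 ∧
            (∀ v, f ⟨ν - 1, by omega⟩ (γ v) = f ⟨ν - 2, by omega⟩ v) ∧
            (∀ v, f ⟨ν - 2, by omega⟩ (γ v) = f ⟨ν - 1, by omega⟩ v))) := by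
  obtain ⟨f, hli, hfN, hspan, hcases⟩ :=
    (End.eigenspace (toLin' Q) lam).exists_basis_normalForm_of_swap
      (fun _ hf => comp_mem_eigenspace_toLin' hγQ hf) hγa hγb hν hdim
  refine ⟨f, hli, fun i => ?_, hspan, hcases⟩
  rw [← toLin'_apply]
  exact End.mem_eigenspace_iff.1 (hfN i)
end

section
/- Let X be a finite connected graph with edge conductances a_X, and substitute a finite graph V with distinguished vertices a, b (with automorphism γ exchanging them) along each edge of X, forming X[V] with product conductances and transition matrix P_*. Let λ ∈ spec(Q_{V^o}) and suppose f : V^o → ℝ is an eigenfunction of Q_{V^o} with eigenvalue λ satisfying Qf(a) = Σ_v q(a,v)f(v) = 0 and Qf(b) = Σ_v q(b,v)f(v) = 0. Then for each edge e ∈ E_X, the function f*_e on X[V] defined by f*_e(e, v) = f(v) for v ∈ V^o and f*_e ≡ 0 elsewhere is an eigenfunction of P_* with eigenvalue λ; moreover these |E_X| functions are linearly independent. -/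
open Finset

noncomputable section

/-- The interior `V° = V \ {a,b}` of the substituent graph. -/
abbrev Vo (V : Type*) (a b : V) := {v : V // v ≠ a ∧ v ≠ b}

/-- The vertex set of the edge substitution `X[V]`:  `X ∪ (E_X × V°)`. -/
abbrev XVert (X E : Type*) (V : Type*) (a b : V) := X ⊕ (E × Vo V a b)

/-- Total conductance at a vertex of `V`. -/
def mVof {V : Type*} [Fintype V] (aV : V → V → ℝ) (u : V) : ℝ := ∑ v, aV u v

/-- Transition probabilities of the network `(V, a_V)`. -/
def qof {V : Type*} [Fintype V] (aV : V → V → ℝ) (u v : V) : ℝ :=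
  aV u v / mVof aV u

/-- Conductances of the substitution `X[V]`: along each edge `e = [ea e, eb e]` of `X`
(with weight `w e`) a copy of `V` is inserted, identifying `a` with `ea e` and `b`
with `eb e`; the new conductances are the products `w e * aV u v`. -/
def cstar {X E V : Type*} [DecidableEq X] [DecidableEq E] [Fintype E]
    (ea eb : E → X) (w : E → ℝ) (aV : V → V → ℝ) (a b : V) :
    XVert X E V a b → XVert X E V a b → ℝ
  | Sum.inl x, Sum.inl y =>
      ∑ e, if (ea e = x ∧ eb e = y) ∨ (ea e = y ∧ eb e = x) then w e * aV a b else 0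
  | Sum.inl x, Sum.inr ev =>
      w ev.1 * ((if ea ev.1 = x then aV a ev.2.1 else 0) +
        (if eb ev.1 = x then aV b ev.2.1 else 0))
  | Sum.inr ev, Sum.inl x =>
      w ev.1 * ((if ea ev.1 = x then aV ev.2.1 a else 0) +
        (if eb ev.1 = x then aV ev.2.1 b else 0))
  | Sum.inr eu, Sum.inr ev =>
      if eu.1 = ev.1 then w eu.1 * aV eu.2.1 ev.2.1 else 0

/-- Total conductance at a vertex of `X[V]`. -/
def mstar {X E V : Type*} [Fintype X] [DecidableEq X] [DecidableEq E] [Fintype E]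
    [Fintype V] [DecidableEq V]
    (ea eb : E → X) (w : E → ℝ) (aV : V → V → ℝ) (a b : V)
    (p : XVert X E V a b) : ℝ :=
  ∑ q, cstar ea eb w aV a b p q

/-- The reversible stochastic transition matrix `P_*` of `X[V]`. -/
def pstar {X E V : Type*} [Fintype X] [DecidableEq X] [DecidableEq E] [Fintype E]
    [Fintype V] [DecidableEq V]
    (ea eb : E → X) (w : E → ℝ) (aV : V → V → ℝ) (a b : V)
    (p q : XVert X E V a b) : ℝ :=
  cstar ea eb w aV a b p q / mstar ea eb w aV a b p

end

lemma sumVo {V : Type*} [Fintype V] [DecidableEq V] {a b : V} (hab : a ≠ b)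
    (g : V → ℝ) : ∑ v : {v : V // v ≠ a ∧ v ≠ b}, g v.1 = ∑ v, g v - g a - g b := by
  have h1 : ∑ v ∈ Finset.univ.filter (fun v => v ≠ a ∧ v ≠ b), g v
      = ∑ v : {v : V // v ≠ a ∧ v ≠ b}, g v.1 :=
    Finset.sum_subtype _ (fun x => by simp) g
  have h2 := Finset.sum_filter_add_sum_filter_not Finset.univ (fun v => v ≠ a ∧ v ≠ b) g
  have h3 : Finset.univ.filter (fun v => ¬(v ≠ a ∧ v ≠ b)) = ({a, b} : Finset V) := by
    ext x; simp [not_and_or]; tauto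
  rw [h3, Finset.sum_pair hab] at h2
  rw [← h1]; linarith

/-- Interior eigenfunctions with vanishing boundary sums extend edgewise to `|E_X|`
linearly independent eigenfunctions of `P_*` with the same eigenvalue. -/
theorem stmt10
    {X E V : Type*} [Fintype X] [Fintype E] [Fintype V]
    [DecidableEq X] [DecidableEq E] [DecidableEq V]
    (ea eb : E → X) (hne : ∀ e, ea e ≠ eb e)
    (hinc : ∀ x, ∃ e, ea e = x ∨ eb e = x)
    (hXconn : (SimpleGraph.fromRel fun x y => ∃ e, ea e = x ∧ eb e = y).Connected)
    (w : E → ℝ) (hw : ∀ e, 0 < w e)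
    (aV : V → V → ℝ) (haVsym : ∀ u v, aV u v = aV v u)
    (haVnn : ∀ u v, 0 ≤ aV u v) (haVdiag : ∀ v, aV v v = 0)
    (hmV : ∀ u, 0 < mVof aV u)
    (hVconn : (SimpleGraph.fromRel fun u v => 0 < aV u v).Connected)
    (a b : V) (hab : a ≠ b)
    (γ : Equiv.Perm V) (hγ : ∀ u v, aV (γ u) (γ v) = aV u v)
    (hγa : γ a = b) (hγb : γ b = a)
    (lam : ℝ) (f : Vo V a b → ℝ) (hf0 : f ≠ 0)
    (heig : ∀ u : Vo V a b, ∑ v : Vo V a b, qof aV u.1 v.1 * f v = lam * f u)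
    (hQa : ∑ v : Vo V a b, qof aV a v.1 * f v = 0)
    (hQb : ∑ v : Vo V a b, qof aV b v.1 * f v = 0) :
    (∀ e0 : E, ∀ p : XVert X E V a b,
        ∑ q, pstar ea eb w aV a b p q *
          Sum.elim (fun _ : X => (0:ℝ))
            (fun ev : E × Vo V a b => if ev.1 = e0 then f ev.2 else 0) q
        = lam * Sum.elim (fun _ : X => (0:ℝ))
            (fun ev : E × Vo V a b => if ev.1 = e0 then f ev.2 else 0) p) ∧
    LinearIndependent ℝ (fun e0 : E =>
      (Sum.elim (fun _ : X => (0:ℝ))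
        (fun ev : E × Vo V a b => if ev.1 = e0 then f ev.2 else 0) :
        XVert X E V a b → ℝ)) := by
  classical
  have hmne : ∀ u, mVof aV u ≠ 0 := fun u => (hmV u).ne'
  -- zero boundary sums without the normalization
  have hza : ∑ v : Vo V a b, aV a v.1 * f v = 0 := by
    have := hQa
    simp only [qof, div_mul_eq_mul_div, ← Finset.sum_div] at this
    rcases div_eq_zero_iff.1 this with h | h
    · exact h
    · exact absurd h (hmne a)
  have hzb : ∑ v : Vo V a b, aV b v.1 * f v = 0 := by
    have := hQb
    simp only [qof, div_mul_eq_mul_div, ← Finset.sum_div] at this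
    rcases div_eq_zero_iff.1 this with h | h
    · exact h
    · exact absurd h (hmne b)
  -- total conductance at interior vertices of X[V]
  have hmstar : ∀ (e : E) (u : Vo V a b),
      mstar ea eb w aV a b (Sum.inr (e, u)) = w e * mVof aV u.1 := by
    intro e u
    unfold mstar
    rw [Fintype.sum_sum_type]
    have h1 : ∑ x : X, cstar ea eb w aV a b (Sum.inr (e, u)) (Sum.inl x)
        = w e * (aV u.1 a + aV u.1 b) := by
      simp only [cstar]
      rw [← Finset.mul_sum]
      congr 1
      rw [Finset.sum_add_distrib]
      simp [Finset.sum_ite_eq]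
    have h2 : ∑ ev : E × Vo V a b, cstar ea eb w aV a b (Sum.inr (e, u)) (Sum.inr ev)
        = w e * (mVof aV u.1 - aV u.1 a - aV u.1 b) := by
      simp only [cstar]
      rw [Fintype.sum_prod_type]
      have : ∀ e' : E, ∑ v : Vo V a b,
          (if e = e' then w e * aV u.1 v.1 else 0)
          = if e = e' then ∑ v : Vo V a b, w e * aV u.1 v.1 else 0 := by
        intro e'; split <;> simp
      simp only [this, Finset.sum_ite_eq, Finset.mem_univ, if_true]
      rw [← Finset.mul_sum, sumVo hab (fun v => aV u.1 v)]
      rfl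
    rw [h1, h2]; ring
  constructor
  · intro e0 p
    rw [Fintype.sum_sum_type]
    have hzl : ∀ (x : X), pstar ea eb w aV a b p (Sum.inl x) *
        Sum.elim (fun _ : X => (0:ℝ))
          (fun ev : E × Vo V a b => if ev.1 = e0 then f ev.2 else 0) (Sum.inl x) = 0 := by
      intro x; simp
    rw [Finset.sum_congr rfl (fun x _ => hzl x), Finset.sum_const, smul_zero, zero_add]
    cases p with
    | inl x =>
        -- boundary vertex case: both sides vanish
        simp only [Sum.elim_inl, mul_zero]
        rw [Fintype.sum_prod_type]
        simp only [Sum.elim_inr]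
        have step : ∀ e' : E, ∑ v : Vo V a b,
            pstar ea eb w aV a b (Sum.inl x) (Sum.inr (e', v)) *
              (if e' = e0 then f v else 0)
            = if e' = e0 then
                ∑ v : Vo V a b, pstar ea eb w aV a b (Sum.inl x) (Sum.inr (e', v)) * f v
              else 0 := by
          intro e'; split <;> simp
        simp only [step, Finset.sum_ite_eq', Finset.mem_univ, if_true]
        have hkey : ∑ v : Vo V a b,
            cstar ea eb w aV a b (Sum.inl x) (Sum.inr (e0, v)) * f v = 0 := by
          simp only [cstar]
          by_cases hA : ea e0 = x <;> by_cases hB : eb e0 = x <;>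
            simp [hA, hB, mul_add, add_mul, Finset.sum_add_distrib, mul_assoc,
              ← Finset.mul_sum, hza, hzb]
        simp only [pstar, div_mul_eq_mul_div, ← Finset.sum_div, hkey, zero_div]
    | inr eu =>
        obtain ⟨e, u⟩ := eu
        rw [Fintype.sum_prod_type]
        simp only [Sum.elim_inr]
        have step : ∀ e' : E, ∑ v : Vo V a b,
            pstar ea eb w aV a b (Sum.inr (e, u)) (Sum.inr (e', v)) *
              (if e' = e0 then f v else 0)
            = if e' = e0 then
                ∑ v : Vo V a b,
                  pstar ea eb w aV a b (Sum.inr (e, u)) (Sum.inr (e', v)) * f v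
              else 0 := by
          intro e'; split <;> simp
        rw [Finset.sum_congr rfl fun e' _ => step e', Finset.sum_ite_eq' Finset.univ e0]
        simp only [Finset.mem_univ, if_true]
        by_cases he : e = e0
        · subst he
          simp only [if_pos rfl]
          have : ∀ v : Vo V a b,
              pstar ea eb w aV a b (Sum.inr (e, u)) (Sum.inr (e, v)) * f v
              = qof aV u.1 v.1 * f v := by
            intro v
            simp only [pstar, cstar, if_pos rfl, eq_self_iff_true, if_true, hmstar, qof]
            rw [mul_div_mul_left _ _ (hw e).ne']
          rw [Finset.sum_congr rfl (fun v _ => this v), heig u]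
          simp
        · have : ∀ v : Vo V a b,
              pstar ea eb w aV a b (Sum.inr (e, u)) (Sum.inr (e0, v)) * f v = 0 := by
            intro v
            simp [pstar, cstar, he]
          rw [Finset.sum_congr rfl (fun v _ => this v)]
          simp [he]
  · rw [Fintype.linearIndependent_iff]
    intro c hc e
    obtain ⟨v0, hv0⟩ : ∃ v0, f v0 ≠ 0 := Function.ne_iff.1 hf0
    have h := congrFun hc (Sum.inr (e, v0))
    simp only [Finset.sum_apply, Pi.smul_apply, Sum.elim_inr, smul_eq_mul,
      Pi.zero_apply, mul_ite, mul_zero, Finset.sum_ite_eq, Finset.mem_univ,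
      if_true] at h
    exact (mul_eq_zero.1 h).resolve_right hv0
end

section
/- With the edge-substitution setup: if λ ∈ spec(Q) has an eigenfunction f on V with Qf = λf and f(a) = f(b) = c, then the function f* on X[V] defined by f* ≡ c on X ⊂ X[V] and f*(e, v) = f(v) for every (e, v) ∈ E_X × V^o is an eigenfunction of P_* with eigenvalue λ. -/
open Finset

lemma sum_split {V : Type*} [Fintype V] [DecidableEq V] (a b : V) (hab : a ≠ b) (g : V → ℝ) :
    ∑ v, g v = g a + g b + ∑ u : Vo V a b, g u.1 := by
  classical
  have h1 : ∑ u : Vo V a b, g u.1 = ∑ v ∈ univ.filter (fun v => v ≠ a ∧ v ≠ b), g v :=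
    (Finset.sum_subtype _ (by simp) g).symm
  have h2 : (univ : Finset V) = {a, b} ∪ univ.filter (fun v => v ≠ a ∧ v ≠ b) := by
    ext v; by_cases hva : v = a <;> by_cases hvb : v = b <;> simp [hva, hvb]
  rw [h1]
  conv_lhs => rw [h2]
  rw [Finset.sum_union]
  · rw [Finset.sum_insert (by simp [hab]), Finset.sum_singleton]
  · simp [Finset.disjoint_left]

/-- An eigenfunction of  with  extends to an eigenfunction of 
with the same eigenvalue, constant  on  and equal to  on each
substituted copy of . -/
theorem stmt11
    {X E V : Type*} [Fintype X] [Fintype E] [Fintype V]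
    [DecidableEq X] [DecidableEq E] [DecidableEq V]
    (ea eb : E → X) (hne : ∀ e, ea e ≠ eb e)
    (hinc : ∀ x, ∃ e, ea e = x ∨ eb e = x)
    (hXconn : (SimpleGraph.fromRel fun x y => ∃ e, ea e = x ∧ eb e = y).Connected)
    (w : E → ℝ) (hw : ∀ e, 0 < w e)
    (aV : V → V → ℝ) (haVsym : ∀ u v, aV u v = aV v u)
    (haVnn : ∀ u v, 0 ≤ aV u v) (haVdiag : ∀ v, aV v v = 0)
    (hmV : ∀ u, 0 < mVof aV u)
    (hVconn : (SimpleGraph.fromRel fun u v => 0 < aV u v).Connected)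
    (a b : V) (hab : a ≠ b)
    (γ : Equiv.Perm V) (hγ : ∀ u v, aV (γ u) (γ v) = aV u v)
    (hγa : γ a = b) (hγb : γ b = a)
    (lam : ℝ) (f : V → ℝ) (hf0 : f ≠ 0)
    (heig : ∀ u : V, ∑ v, qof aV u v * f v = lam * f u)
    (c : ℝ) (hfa : f a = c) (hfb : f b = c) :
    ∀ p : XVert X E V a b,
      ∑ q, pstar ea eb w aV a b p q *
        Sum.elim (fun _ : X => c) (fun ev : E × Vo V a b => f ev.2.1) q
      = lam * Sum.elim (fun _ : X => c) (fun ev : E × Vo V a b => f ev.2.1) p := by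
  classical
  classical
  set F : XVert X E V a b → ℝ :=
    Sum.elim (fun _ : X => c) (fun ev : E × Vo V a b => f ev.2.1) with hF
  -- eigenvalue equation in conductance form
  have heig' : ∀ u : V, ∑ v, aV u v * f v = lam * f u * mVof aV u := by
    intro u
    have h := heig u
    have hm := (hmV u).ne'
    rw [show ∑ v, qof aV u v * f v = (∑ v, aV u v * f v) / mVof aV u by
      simp only [qof, div_mul_eq_mul_div]; rw [← Finset.sum_div]] at h
    field_simp at h
    linarith [h]
  -- symmetry: mVof b = mVof a
  have hmab : mVof aV b = mVof aV a := by
    unfold mVof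
    rw [← hγa]
    rw [← Equiv.sum_comp γ (fun v => aV (γ a) v)]
    simp [hγ]
  -- key sums
  have hsumA : ∀ u : V, ∑ v, aV u v * f v = aV u a * c + aV u b * c + ∑ v : Vo V a b, aV u v.1 * f v.1 := by
    intro u
    rw [sum_split a b hab (fun v => aV u v * f v)]
    rw [hfa, hfb]
  -- rewrite pstar sum as cstar sum over mstar
  have hdiv : ∀ p : XVert X E V a b,
      ∑ q, pstar ea eb w aV a b p q * F q
        = (∑ q, cstar ea eb w aV a b p q * F q) / mstar ea eb w aV a b p := by
    intro p
    simp only [pstar, div_mul_eq_mul_div]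
    rw [← Finset.sum_div]
  -- general numerator computation at an inner vertex
  have keyR : ∀ (e : E) (u : Vo V a b) (g : V → ℝ) (c' : ℝ), g a = c' → g b = c' →
      ∑ q, cstar ea eb w aV a b (Sum.inr (e, u)) q *
        Sum.elim (fun _ : X => c') (fun ev : E × Vo V a b => g ev.2.1) q
      = w e * ∑ v, aV u.1 v * g v := by
    intro e u g c' hga hgb
    rw [Fintype.sum_sum_type]
    have h1 : ∑ x : X, cstar ea eb w aV a b (Sum.inr (e, u)) (Sum.inl x) *
        Sum.elim (fun _ : X => c') (fun ev : E × Vo V a b => g ev.2.1) (Sum.inl x)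
        = w e * (aV u.1 a * c' + aV u.1 b * c') := by
      simp only [cstar, Sum.elim_inl, mul_add, add_mul, ite_mul, zero_mul, mul_ite, mul_zero,
        Finset.sum_add_distrib, Finset.sum_ite_eq, Finset.mem_univ, if_true]
      ring
    have h2 : ∑ ev : E × Vo V a b, cstar ea eb w aV a b (Sum.inr (e, u)) (Sum.inr ev) *
        Sum.elim (fun _ : X => c') (fun ev : E × Vo V a b => g ev.2.1) (Sum.inr ev)
        = w e * ∑ v : Vo V a b, aV u.1 v.1 * g v.1 := by
      rw [Fintype.sum_prod_type]
      simp only [cstar, Sum.elim_inr, ite_mul, zero_mul]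
      rw [Finset.sum_comm]
      simp [Finset.sum_ite_eq, Finset.mul_sum, mul_assoc]
    rw [h1, h2, sum_split a b hab (fun v => aV u.1 v * g v), hga, hgb]
    ring
  -- general numerator computation at an original vertex
  have keyL : ∀ (x : X) (g : V → ℝ) (c' : ℝ), g a = c' → g b = c' →
      ∑ q, cstar ea eb w aV a b (Sum.inl x) q *
        Sum.elim (fun _ : X => c') (fun ev : E × Vo V a b => g ev.2.1) q
      = ∑ e, ((if ea e = x then w e else 0) * (∑ v, aV a v * g v)
            + (if eb e = x then w e else 0) * (∑ v, aV b v * g v)) := by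
    intro x g c' hga hgb
    have hMa : ∑ v, aV a v * g v = aV a b * c' + ∑ v : Vo V a b, aV a v.1 * g v.1 := by
      rw [sum_split a b hab (fun v => aV a v * g v), hga, hgb, haVdiag]; ring
    have hMb : ∑ v, aV b v * g v = aV a b * c' + ∑ v : Vo V a b, aV b v.1 * g v.1 := by
      rw [sum_split a b hab (fun v => aV b v * g v), hga, hgb, haVdiag, haVsym b a]; ring
    rw [Fintype.sum_sum_type]
    have h1 : ∑ y : X, cstar ea eb w aV a b (Sum.inl x) (Sum.inl y) *
        Sum.elim (fun _ : X => c') (fun ev : E × Vo V a b => g ev.2.1) (Sum.inl y)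
        = ∑ e, ((if ea e = x then w e * aV a b * c' else 0)
              + (if eb e = x then w e * aV a b * c' else 0)) := by
      simp only [cstar, Sum.elim_inl, Finset.sum_mul, ite_mul, zero_mul]
      rw [Finset.sum_comm]
      refine Finset.sum_congr rfl fun e _ => ?_
      by_cases h1 : ea e = x <;> by_cases h2 : eb e = x
      · exact absurd (h1.trans h2.symm) (hne e)
      · simp [h1, h2, Finset.sum_ite_eq, mul_assoc]
      · simp [h1, h2, Finset.sum_ite_eq', mul_assoc]
      · simp [h1, h2]
    have h2 : ∑ ev : E × Vo V a b, cstar ea eb w aV a b (Sum.inl x) (Sum.inr ev) *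
        Sum.elim (fun _ : X => c') (fun ev : E × Vo V a b => g ev.2.1) (Sum.inr ev)
        = ∑ e, ((if ea e = x then w e else 0) * (∑ v : Vo V a b, aV a v.1 * g v.1)
              + (if eb e = x then w e else 0) * (∑ v : Vo V a b, aV b v.1 * g v.1)) := by
      rw [Fintype.sum_prod_type]
      refine Finset.sum_congr rfl fun e _ => ?_
      simp only [cstar, Sum.elim_inr]
      by_cases h1 : ea e = x <;> by_cases h2 : eb e = x
      · exact absurd (h1.trans h2.symm) (hne e)
      · simp [h1, h2, Finset.mul_sum, mul_assoc]
      · simp [h1, h2, Finset.mul_sum, mul_assoc]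
      · simp [h1, h2]
    rw [h1, h2, ← Finset.sum_add_distrib]
    refine Finset.sum_congr rfl fun e _ => ?_
    rw [hMa, hMb]
    by_cases h1 : ea e = x <;> by_cases h2 : eb e = x <;> simp [h1, h2] <;> ring
  intro p
  rw [hdiv]
  rcases p with x | ⟨e, u⟩
  · -- original vertex
    have hnum := keyL x f c hfa hfb
    have hden := keyL x (fun _ => 1) 1 rfl rfl
    have hmstar : mstar ea eb w aV a b (Sum.inl x)
        = ∑ q, cstar ea eb w aV a b (Sum.inl x) q *
            Sum.elim (fun _ : X => (1:ℝ)) (fun ev : E × Vo V a b => (fun _ => (1:ℝ)) ev.2.1) q := by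
      unfold mstar
      refine Finset.sum_congr rfl fun q _ => ?_
      rcases q with y | ev <;> simp
    set S : ℝ := ∑ e, ((if ea e = x then w e else 0) + (if eb e = x then w e else 0)) with hS
    have hSpos : 0 < S := by
      obtain ⟨e0, he0⟩ := hinc x
      refine Finset.sum_pos' (fun e _ => ?_) ⟨e0, Finset.mem_univ e0, ?_⟩
      · split_ifs <;> linarith [(hw e).le]
      · rcases he0 with h | h
        · have h2 : eb e0 ≠ x := fun hh => hne e0 (h.trans hh.symm)
          rw [if_pos h, if_neg h2]
          simpa using hw e0
        · have h2 : ea e0 ≠ x := fun hh => hne e0 (hh.trans h.symm)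
          rw [if_neg h2, if_pos h]
          simpa using hw e0
    have hma : mVof aV a > 0 := hmV a
    have hnum' : (∑ q, cstar ea eb w aV a b (Sum.inl x) q * F q)
        = S * (lam * c * mVof aV a) := by
      rw [hF, hnum, hS, Finset.sum_mul]
      refine Finset.sum_congr rfl fun e _ => ?_
      rw [heig' a, heig' b, hfa, hfb, hmab]
      ring
    have hden' : mstar ea eb w aV a b (Sum.inl x) = S * mVof aV a := by
      rw [hmstar, hden, hS, Finset.sum_mul]
      refine Finset.sum_congr rfl fun e _ => ?_
      have : ∀ u : V, ∑ v, aV u v * 1 = mVof aV u := by intro u; simp [mVof]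
      rw [this a, this b, hmab]
      ring
    rw [hnum', hden', mul_comm S, mul_comm S, mul_div_mul_right _ _ hSpos.ne',
      mul_div_assoc, div_self hma.ne']
    simp [hF]
  · -- inner vertex
    have hnum := keyR e u f c hfa hfb
    have hden := keyR e u (fun _ => 1) 1 rfl rfl
    have hmstar : mstar ea eb w aV a b (Sum.inr (e, u))
        = ∑ q, cstar ea eb w aV a b (Sum.inr (e, u)) q *
            Sum.elim (fun _ : X => (1:ℝ)) (fun ev : E × Vo V a b => (fun _ => (1:ℝ)) ev.2.1) q := by
      unfold mstar
      refine Finset.sum_congr rfl fun q _ => ?_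
      rcases q with y | ev <;> simp
    have hmu : 0 < mVof aV u.1 := hmV u.1
    have hnum' : (∑ q, cstar ea eb w aV a b (Sum.inr (e, u)) q * F q)
        = w e * (lam * f u.1 * mVof aV u.1) := by
      rw [hF, hnum, heig' u.1]
    have hden' : mstar ea eb w aV a b (Sum.inr (e, u)) = w e * mVof aV u.1 := by
      rw [hmstar, hden]
      congr 1
      simp [mVof]
    rw [hnum', hden', mul_div_mul_left _ _ (hw e).ne', mul_div_assoc, div_self hmu.ne']
    simp [hF]
end

section
/- With the edge-substitution setup, suppose X is bipartite with vertex classes X_1, X_2, edges oriented so that e^a ∈ X_1 and e^b ∈ X_2 for every edge e. If λ ∈ spec(Q) has an eigenfunction f on V with Qf = λf, f(a) = 1, f(b) = −1, then the function f* on X[V] defined by f* ≡ 1 on X_1, f* ≡ −1 on X_2, and f*(e, v) = f(v) for (e,v) ∈ E_X × V^o is an eigenfunction of P_* with eigenvalue λ. -/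
open Finset

lemma sum_Vo {V : Type*} [Fintype V] [DecidableEq V] (a b : V) (hab : a ≠ b) (g : V → ℝ) :
    ∑ u : Vo V a b, g u.1 = (∑ u, g u) - g a - g b := by
  have h : ∑ u ∈ (Finset.univ.erase a).erase b, g u = ∑ u : Vo V a b, g u.1 := by
    apply Finset.sum_subtype
    intro x
    simp [and_comm]
  rw [← h, Finset.sum_erase_eq_sub (by simp [hab.symm]), Finset.sum_erase_eq_sub (by simp)]

/-- If  is bipartite (witnessed by a 2-colouring  compatible with the edge
orientation) and  is an eigenfunction of  with , , then the
 extension of  is an eigenfunction of  with the same eigenvalue. -/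
theorem stmt12
    {X E V : Type*} [Fintype X] [Fintype E] [Fintype V]
    [DecidableEq X] [DecidableEq E] [DecidableEq V]
    (ea eb : E → X) (hne : ∀ e, ea e ≠ eb e)
    (hinc : ∀ x, ∃ e, ea e = x ∨ eb e = x)
    (hXconn : (SimpleGraph.fromRel fun x y => ∃ e, ea e = x ∧ eb e = y).Connected)
    (w : E → ℝ) (hw : ∀ e, 0 < w e)
    (aV : V → V → ℝ) (haVsym : ∀ u v, aV u v = aV v u)
    (haVnn : ∀ u v, 0 ≤ aV u v) (haVdiag : ∀ v, aV v v = 0)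
    (hmV : ∀ u, 0 < mVof aV u)
    (hVconn : (SimpleGraph.fromRel fun u v => 0 < aV u v).Connected)
    (a b : V) (hab : a ≠ b)
    (γ : Equiv.Perm V) (hγ : ∀ u v, aV (γ u) (γ v) = aV u v)
    (hγa : γ a = b) (hγb : γ b = a)
    (side : X → Bool)
    (horient : ∀ e, side (ea e) = true ∧ side (eb e) = false)
    (lam : ℝ) (f : V → ℝ) (hf0 : f ≠ 0)
    (heig : ∀ u : V, ∑ v, qof aV u v * f v = lam * f u)
    (hfa : f a = 1) (hfb : f b = -1) :
    ∀ p : XVert X E V a b,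
      ∑ q, pstar ea eb w aV a b p q *
        Sum.elim (fun x : X => if side x then (1:ℝ) else -1)
          (fun ev : E × Vo V a b => f ev.2.1) q
      = lam * Sum.elim (fun x : X => if side x then (1:ℝ) else -1)
          (fun ev : E × Vo V a b => f ev.2.1) p := by
  classical
  set g : XVert X E V a b → ℝ := Sum.elim (fun x : X => if side x then (1:ℝ) else -1)
      (fun ev : E × Vo V a b => f ev.2.1) with hg
  set m : ℝ := mVof aV a with hmdef
  have hmab : mVof aV b = m := by
    unfold mVof
    rw [hmdef]
    unfold mVof
    rw [← Equiv.sum_comp γ (fun v => aV a v)]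
    simp only [← hγb, hγ]
  have hmpos : 0 < m := hmV a
  have heig' : ∀ u, ∑ v, aV u v * f v = lam * (mVof aV u * f u) := by
    intro u
    have h := heig u
    have hm : mVof aV u ≠ 0 := (hmV u).ne'
    rw [show lam * (mVof aV u * f u) = (lam * f u) * mVof aV u by ring, ← h,
      Finset.sum_mul]
    refine Finset.sum_congr rfl fun v _ => ?_
    unfold qof
    field_simp
  have hps : ∀ p, (∑ q, pstar ea eb w aV a b p q * g q)
      = (∑ q, cstar ea eb w aV a b p q * g q) / mstar ea eb w aV a b p := by
    intro p
    rw [Finset.sum_div]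
    exact Finset.sum_congr rfl fun q _ => by rw [pstar, div_mul_eq_mul_div]
  intro p
  rw [hps]
  match p with
  | Sum.inr ⟨e, v, hv⟩ =>
    have hnum : (∑ q, cstar ea eb w aV a b (Sum.inr (e, ⟨v, hv⟩)) q * g q)
        = w e * (lam * (mVof aV v * f v)) := by
      rw [Fintype.sum_sum_type]
      have h1 : (∑ x : X, cstar ea eb w aV a b (Sum.inr (e, ⟨v, hv⟩)) (Sum.inl x) * g (Sum.inl x))
          = w e * (aV v a - aV v b) := by
        have step : ∀ x : X, cstar ea eb w aV a b (Sum.inr (e, ⟨v, hv⟩)) (Sum.inl x) * g (Sum.inl x)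
            = (if ea e = x then w e * aV v a * (if side x then (1:ℝ) else -1) else 0)
              + (if eb e = x then w e * aV v b * (if side x then (1:ℝ) else -1) else 0) := by
          intro x
          simp only [cstar, hg, Sum.elim_inl]
          split_ifs <;> ring
        rw [Finset.sum_congr rfl fun x _ => step x, Finset.sum_add_distrib,
          Finset.sum_ite_eq, Finset.sum_ite_eq]
        simp only [Finset.mem_univ, if_true, (horient e).1, (horient e).2]
        norm_num
        ring
      have h2 : (∑ eu : E × Vo V a b,
            cstar ea eb w aV a b (Sum.inr (e, ⟨v, hv⟩)) (Sum.inr eu) * g (Sum.inr eu))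
          = w e * ((∑ u, aV v u * f u) - aV v a * f a - aV v b * f b) := by
        simp only [cstar, hg, Sum.elim_inr]
        rw [Fintype.sum_prod_type_right]
        have step : ∀ u : Vo V a b, (∑ e' : E,
            (if e = e' then w e * aV v u.1 else 0) * f u.1) = w e * (aV v u.1 * f u.1) := by
          intro u
          simp [ite_mul]
          ring
        rw [Finset.sum_congr rfl fun u _ => step u,
          sum_Vo a b hab (fun u => w e * (aV v u * f u)), ← Finset.mul_sum]
        ring
      rw [h1, h2, ← heig' v, hfa, hfb]
      ring
    have hden : mstar ea eb w aV a b (Sum.inr (e, ⟨v, hv⟩)) = w e * mVof aV v := by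
      unfold mstar
      rw [Fintype.sum_sum_type]
      have h1 : (∑ x : X, cstar ea eb w aV a b (Sum.inr (e, ⟨v, hv⟩)) (Sum.inl x))
          = w e * (aV v a + aV v b) := by
        have step : ∀ x : X, cstar ea eb w aV a b (Sum.inr (e, ⟨v, hv⟩)) (Sum.inl x)
            = (if ea e = x then w e * aV v a else 0) + (if eb e = x then w e * aV v b else 0) := by
          intro x
          simp only [cstar]
          split_ifs <;> ring
        rw [Finset.sum_congr rfl fun x _ => step x, Finset.sum_add_distrib,
          Finset.sum_ite_eq, Finset.sum_ite_eq]
        simp only [Finset.mem_univ, if_true]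
        ring
      have h2 : (∑ eu : E × Vo V a b, cstar ea eb w aV a b (Sum.inr (e, ⟨v, hv⟩)) (Sum.inr eu))
          = w e * ((mVof aV v) - aV v a - aV v b) := by
        simp only [cstar]
        rw [Fintype.sum_prod_type_right]
        have step : ∀ u : Vo V a b, (∑ e' : E, (if e = e' then w e * aV v u.1 else 0))
            = w e * aV v u.1 := by intro u; simp
        rw [Finset.sum_congr rfl fun u _ => step u,
          sum_Vo a b hab (fun u => w e * aV v u), ← Finset.mul_sum]
        unfold mVof
        ring
      rw [h1, h2]
      ring
    rw [hnum, hden]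
    have hwne : w e ≠ 0 := (hw e).ne'
    have hmne : mVof aV v ≠ 0 := (hmV v).ne'
    rw [hg]
    simp only [Sum.elim_inr]
    field_simp
  | Sum.inl x =>
    cases hsx : side x with
    | true =>
      have hebx : ∀ e, eb e ≠ x := by
        intro e h
        have h2 := (horient e).2
        rw [h, hsx] at h2
        exact absurd h2 (by simp)
      set W : ℝ := ∑ e, if ea e = x then w e else 0 with hW
      have hWpos : 0 < W := by
        rw [hW]
        apply Finset.sum_pos'
        · intro e _
          split_ifs
          · exact (hw e).le
          · exact le_rfl
        · obtain ⟨e, he⟩ := hinc x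
          rcases he with he | he
          · exact ⟨e, Finset.mem_univ e, by simp [he, hw e]⟩
          · exact absurd he (hebx e)
      have hden : mstar ea eb w aV a b (Sum.inl x) = m * W := by
        unfold mstar
        rw [Fintype.sum_sum_type]
        have h1 : (∑ y : X, cstar ea eb w aV a b (Sum.inl x) (Sum.inl y))
            = aV a b * W := by
          simp only [cstar]
          rw [Finset.sum_comm]
          have inner : ∀ e : E, (∑ y : X,
              if (ea e = x ∧ eb e = y) ∨ (ea e = y ∧ eb e = x) then w e * aV a b else 0)
              = if ea e = x then w e * aV a b else 0 := by
            intro e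
            by_cases h1 : ea e = x
            · simp [h1, hebx e, Finset.sum_ite_eq]
            · simp [h1, hebx e]
          rw [Finset.sum_congr rfl fun e _ => inner e, hW, Finset.mul_sum]
          exact Finset.sum_congr rfl fun e _ => by split_ifs <;> ring
        have h2 : (∑ eu : E × Vo V a b, cstar ea eb w aV a b (Sum.inl x) (Sum.inr eu))
            = (m - aV a b) * W := by
          simp only [cstar]
          rw [Fintype.sum_prod_type]
          have inner : ∀ e : E, (∑ u : Vo V a b,
              w e * ((if ea e = x then aV a u.1 else 0) + (if eb e = x then aV b u.1 else 0)))
              = if ea e = x then w e * (m - aV a b) else 0 := by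
            intro e
            by_cases h1 : ea e = x
            · simp only [h1, hebx e, if_true, if_false]
              have : ∀ u : Vo V a b, w e * (aV a u.1 + 0) = w e * aV a u.1 := by
                intro u; ring
              rw [Finset.sum_congr rfl fun u _ => this u,
                sum_Vo a b hab (fun u => w e * aV a u), ← Finset.mul_sum]
              rw [hmdef]
              unfold mVof
              rw [haVdiag a]
              ring
            · simp [h1, hebx e]
          rw [Finset.sum_congr rfl fun e _ => inner e, hW, Finset.mul_sum]
          exact Finset.sum_congr rfl fun e _ => by split_ifs <;> ring
        rw [h1, h2]
        ring
      have hnum : (∑ q, cstar ea eb w aV a b (Sum.inl x) q * g q) = lam * m * W := by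
        rw [Fintype.sum_sum_type]
        have h1 : (∑ y : X, cstar ea eb w aV a b (Sum.inl x) (Sum.inl y) * g (Sum.inl y))
            = -(aV a b * W) := by
          simp only [cstar, hg, Sum.elim_inl]
          simp only [Finset.sum_mul]
          rw [Finset.sum_comm]
          have inner : ∀ e : E, (∑ y : X,
              (if (ea e = x ∧ eb e = y) ∨ (ea e = y ∧ eb e = x) then w e * aV a b else 0)
                * (if side y then (1:ℝ) else -1))
              = if ea e = x then -(w e * aV a b) else 0 := by
            intro e
            by_cases h1 : ea e = x
            · have step : ∀ y : X,
                  (if (ea e = x ∧ eb e = y) ∨ (ea e = y ∧ eb e = x) then w e * aV a b else 0)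
                    * (if side y then (1:ℝ) else -1)
                  = if eb e = y then w e * aV a b * (if side y then (1:ℝ) else -1) else 0 := by
                intro y
                by_cases h2 : eb e = y
                · rw [if_pos (Or.inl ⟨h1, h2⟩), if_pos h2]
                · rw [if_neg (by rintro (⟨_, h⟩ | ⟨_, h⟩); exacts [h2 h, hebx e h]),
                    if_neg h2, zero_mul]
              rw [Finset.sum_congr rfl fun y _ => step y, Finset.sum_ite_eq]
              simp [h1, (horient e).2]
            · have step : ∀ y : X,
                  (if (ea e = x ∧ eb e = y) ∨ (ea e = y ∧ eb e = x) then w e * aV a b else 0)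
                    * (if side y then (1:ℝ) else -1) = 0 := by
                intro y
                simp [h1, hebx e]
              rw [Finset.sum_congr rfl fun y _ => step y]
              simp [h1]
          rw [Finset.sum_congr rfl fun e _ => inner e, hW, Finset.mul_sum, ← Finset.sum_neg_distrib]
          exact Finset.sum_congr rfl fun e _ => by split_ifs <;> ring
        have h2 : (∑ eu : E × Vo V a b,
              cstar ea eb w aV a b (Sum.inl x) (Sum.inr eu) * g (Sum.inr eu))
            = (lam * m + aV a b) * W := by
          simp only [cstar, hg, Sum.elim_inr]
          rw [Fintype.sum_prod_type]
          have inner : ∀ e : E, (∑ u : Vo V a b,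
              w e * ((if ea e = x then aV a u.1 else 0) + (if eb e = x then aV b u.1 else 0))
                * f u.1)
              = if ea e = x then w e * (lam * m + aV a b) else 0 := by
            intro e
            by_cases h1 : ea e = x
            · simp only [h1, hebx e, if_true, if_false]
              have step : ∀ u : Vo V a b, w e * (aV a u.1 + 0) * f u.1
                  = w e * (aV a u.1 * f u.1) := by intro u; ring
              rw [Finset.sum_congr rfl fun u _ => step u,
                sum_Vo a b hab (fun u => w e * (aV a u * f u)), ← Finset.mul_sum,
                heig' a, hfa, hfb, haVdiag a, ← hmdef]
              ring
            · simp [h1, hebx e]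
          rw [Finset.sum_congr rfl fun e _ => inner e, hW, Finset.mul_sum]
          exact Finset.sum_congr rfl fun e _ => by split_ifs <;> ring
        rw [h1, h2]
        ring
      rw [hnum, hden, hg]
      simp only [Sum.elim_inl, hsx, if_true]
      rw [div_eq_iff (by positivity)]
      ring
    | false =>
      have heax : ∀ e, ea e ≠ x := by
        intro e h
        have h2 := (horient e).1
        rw [h, hsx] at h2
        exact absurd h2 (by simp)
      set W : ℝ := ∑ e, if eb e = x then w e else 0 with hW
      have hWpos : 0 < W := by
        rw [hW]
        apply Finset.sum_pos'
        · intro e _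
          split_ifs
          · exact (hw e).le
          · exact le_rfl
        · obtain ⟨e, he⟩ := hinc x
          rcases he with he | he
          · exact absurd he (heax e)
          · exact ⟨e, Finset.mem_univ e, by simp [he, hw e]⟩
      have hden : mstar ea eb w aV a b (Sum.inl x) = m * W := by
        unfold mstar
        rw [Fintype.sum_sum_type]
        have h1 : (∑ y : X, cstar ea eb w aV a b (Sum.inl x) (Sum.inl y))
            = aV a b * W := by
          simp only [cstar]
          rw [Finset.sum_comm]
          have inner : ∀ e : E, (∑ y : X,
              if (ea e = x ∧ eb e = y) ∨ (ea e = y ∧ eb e = x) then w e * aV a b else 0)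
              = if eb e = x then w e * aV a b else 0 := by
            intro e
            by_cases h1 : eb e = x
            · simp [h1, heax e, Finset.sum_ite_eq]
            · simp [h1, heax e]
          rw [Finset.sum_congr rfl fun e _ => inner e, hW, Finset.mul_sum]
          exact Finset.sum_congr rfl fun e _ => by split_ifs <;> ring
        have h2 : (∑ eu : E × Vo V a b, cstar ea eb w aV a b (Sum.inl x) (Sum.inr eu))
            = (m - aV a b) * W := by
          simp only [cstar]
          rw [Fintype.sum_prod_type]
          have inner : ∀ e : E, (∑ u : Vo V a b,
              w e * ((if ea e = x then aV a u.1 else 0) + (if eb e = x then aV b u.1 else 0)))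
              = if eb e = x then w e * (m - aV a b) else 0 := by
            intro e
            by_cases h1 : eb e = x
            · simp only [h1, heax e, if_true, if_false]
              have : ∀ u : Vo V a b, w e * (0 + aV b u.1) = w e * aV b u.1 := by
                intro u; ring
              rw [Finset.sum_congr rfl fun u _ => this u,
                sum_Vo a b hab (fun u => w e * aV b u), ← Finset.mul_sum]
              rw [← hmab]
              unfold mVof
              rw [haVdiag b, haVsym b a]
              ring
            · simp [h1, heax e]
          rw [Finset.sum_congr rfl fun e _ => inner e, hW, Finset.mul_sum]
          exact Finset.sum_congr rfl fun e _ => by split_ifs <;> ring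
        rw [h1, h2]
        ring
      have hnum : (∑ q, cstar ea eb w aV a b (Sum.inl x) q * g q) = -(lam * m * W) := by
        rw [Fintype.sum_sum_type]
        have h1 : (∑ y : X, cstar ea eb w aV a b (Sum.inl x) (Sum.inl y) * g (Sum.inl y))
            = aV a b * W := by
          simp only [cstar, hg, Sum.elim_inl]
          simp only [Finset.sum_mul]
          rw [Finset.sum_comm]
          have inner : ∀ e : E, (∑ y : X,
              (if (ea e = x ∧ eb e = y) ∨ (ea e = y ∧ eb e = x) then w e * aV a b else 0)
                * (if side y then (1:ℝ) else -1))
              = if eb e = x then w e * aV a b else 0 := by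
            intro e
            by_cases h1 : eb e = x
            · have step : ∀ y : X,
                  (if (ea e = x ∧ eb e = y) ∨ (ea e = y ∧ eb e = x) then w e * aV a b else 0)
                    * (if side y then (1:ℝ) else -1)
                  = if ea e = y then w e * aV a b * (if side y then (1:ℝ) else -1) else 0 := by
                intro y
                by_cases h2 : ea e = y
                · rw [if_pos (Or.inr ⟨h2, h1⟩), if_pos h2]
                · rw [if_neg (by rintro (⟨h, _⟩ | ⟨h, _⟩); exacts [heax e h, h2 h]),
                    if_neg h2, zero_mul]
              rw [Finset.sum_congr rfl fun y _ => step y, Finset.sum_ite_eq]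
              simp [h1, (horient e).1]
            · have step : ∀ y : X,
                  (if (ea e = x ∧ eb e = y) ∨ (ea e = y ∧ eb e = x) then w e * aV a b else 0)
                    * (if side y then (1:ℝ) else -1) = 0 := by
                intro y
                simp [h1, heax e]
              rw [Finset.sum_congr rfl fun y _ => step y]
              simp [h1]
          rw [Finset.sum_congr rfl fun e _ => inner e, hW, Finset.mul_sum]
          exact Finset.sum_congr rfl fun e _ => by split_ifs <;> ring
        have h2 : (∑ eu : E × Vo V a b,
              cstar ea eb w aV a b (Sum.inl x) (Sum.inr eu) * g (Sum.inr eu))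
            = (-(lam * m) - aV a b) * W := by
          simp only [cstar, hg, Sum.elim_inr]
          rw [Fintype.sum_prod_type]
          have inner : ∀ e : E, (∑ u : Vo V a b,
              w e * ((if ea e = x then aV a u.1 else 0) + (if eb e = x then aV b u.1 else 0))
                * f u.1)
              = if eb e = x then w e * (-(lam * m) - aV a b) else 0 := by
            intro e
            by_cases h1 : eb e = x
            · simp only [h1, heax e, if_true, if_false]
              have step : ∀ u : Vo V a b, w e * (0 + aV b u.1) * f u.1
                  = w e * (aV b u.1 * f u.1) := by intro u; ring
              rw [Finset.sum_congr rfl fun u _ => step u,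
                sum_Vo a b hab (fun u => w e * (aV b u * f u)), ← Finset.mul_sum,
                heig' b, hfa, hfb, haVdiag b, haVsym b a, hmab]
              ring
            · simp [h1, heax e]
          rw [Finset.sum_congr rfl fun e _ => inner e, hW, Finset.mul_sum]
          exact Finset.sum_congr rfl fun e _ => by split_ifs <;> ring
        rw [h1, h2]
        ring
      rw [hnum, hden, hg]
      simp only [Sum.elim_inl, hsx]
      rw [if_neg (by simp), div_eq_iff (by positivity)]
      ring
end

section
/- With the edge-substitution setup and the functions φ(z) = 1/F_V(a,b|z), ψ(z), θ(z) defined from Q: if λ* ∈ ℂ \ spec(Q_{V^o}) satisfies ψ(λ*) ≠ 0 and f : X → ℂ is a nonzero function with Pf = φ(λ*)·f, then f extends to a unique function f* on X[V] with P_* f* = λ* f*, given on each substituted copy by f*(e, v) = f(e^a)·F_{V−b}(v, a | λ*) + f(e^b)·F_{V−a}(v, b | λ*) for v ∈ V^o. -/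
open Finset

noncomputable section

/-- Restriction of `Q` to the interior `V°`, as a complex matrix. -/
def QvoC {V : Type*} [Fintype V] [DecidableEq V] (aV : V → V → ℝ) (a b : V) :
    Matrix (Vo V a b) (Vo V a b) ℂ :=
  Matrix.of fun u v => ((qof aV u.1 v.1 : ℝ) : ℂ)

/-- Resolvent (Green kernel) of `Q_{V°}` at `z`. -/
def GvoC {V : Type*} [Fintype V] [DecidableEq V] (aV : V → V → ℝ) (a b : V)
    (z : ℂ) : Matrix (Vo V a b) (Vo V a b) ℂ :=
  (z • (1 : Matrix (Vo V a b) (Vo V a b) ℂ) - QvoC aV a b)⁻¹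

/-- `F_{V-b}(v, a | z) = ∑_w G_{V°}(v,w|z) q(w,a)`. -/
def FVbC {V : Type*} [Fintype V] [DecidableEq V] (aV : V → V → ℝ) (a b : V)
    (z : ℂ) (v : Vo V a b) : ℂ :=
  ∑ u : Vo V a b, GvoC aV a b z v u * ((qof aV u.1 a : ℝ) : ℂ)

/-- `F_{V-a}(v, b | z) = ∑_w G_{V°}(v,w|z) q(w,b)`. -/
def FVaC {V : Type*} [Fintype V] [DecidableEq V] (aV : V → V → ℝ) (a b : V)
    (z : ℂ) (v : Vo V a b) : ℂ :=
  ∑ u : Vo V a b, GvoC aV a b z v u * ((qof aV u.1 b : ℝ) : ℂ)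

/-- `θ(z) = ∑_{u,v ∈ V°} q(a,u) G_{V°}(u,v|z) q(v,a)`. -/
def thetaC {V : Type*} [Fintype V] [DecidableEq V] (aV : V → V → ℝ) (a b : V)
    (z : ℂ) : ℂ :=
  ∑ u : Vo V a b, ∑ v : Vo V a b,
    ((qof aV a u.1 : ℝ) : ℂ) * GvoC aV a b z u v * ((qof aV v.1 a : ℝ) : ℂ)

/-- `ψ(z) = ∑_{u,v ∈ V°} q(a,u) G_{V°}(u,v|z) q(v,b) + q(a,b)`. -/
def psiC {V : Type*} [Fintype V] [DecidableEq V] (aV : V → V → ℝ) (a b : V)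
    (z : ℂ) : ℂ :=
  (∑ u : Vo V a b, ∑ v : Vo V a b,
    ((qof aV a u.1 : ℝ) : ℂ) * GvoC aV a b z u v * ((qof aV v.1 b : ℝ) : ℂ))
    + ((qof aV a b : ℝ) : ℂ)

/-- `φ(z) = (z - θ(z)) / ψ(z) = 1 / F_V(a,b|z)`. -/
def phiC {V : Type*} [Fintype V] [DecidableEq V] (aV : V → V → ℝ) (a b : V)
    (z : ℂ) : ℂ :=
  (z - thetaC aV a b z) / psiC aV a b z

/-- Transition matrix of the host graph `X` with edge weights `w`. -/
def pXof {X E : Type*} [DecidableEq X] [Fintype E] (ea eb : E → X) (w : E → ℝ)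
    (x y : X) : ℝ :=
  (∑ e, if (ea e = x ∧ eb e = y) ∨ (ea e = y ∧ eb e = x) then w e else 0) /
    (∑ e, w e * ((if ea e = x then 1 else 0) + (if eb e = x then 1 else 0)))

/-- The canonical extension of `f : X → ℂ` to `X[V]` attached to the parameter `z`. -/
def FstarOf {X E V : Type*} [Fintype V] [DecidableEq V] (ea eb : E → X)
    (aV : V → V → ℝ) (a b : V) (z : ℂ) (f : X → ℂ) : XVert X E V a b → ℂ :=
  Sum.elim f fun ev =>
    f (ea ev.1) * FVbC aV a b z ev.2 + f (eb ev.1) * FVaC aV a b z ev.2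

end
namespace Stmt15Aux

open Finset

noncomputable section

variable {V : Type*} [Fintype V] [DecidableEq V]

lemma isUnit_res (aV : V → V → ℝ) (a b : V) {z : ℂ}
    (hz : z ∉ spectrum ℂ (QvoC aV a b)) :
    IsUnit (z • (1 : Matrix (Vo V a b) (Vo V a b) ℂ) - QvoC aV a b) := by
  rw [spectrum.notMem_iff, Algebra.algebraMap_eq_smul_one] at hz
  exact hz

lemma res_mul (aV : V → V → ℝ) (a b : V) {z : ℂ}
    (hz : z ∉ spectrum ℂ (QvoC aV a b)) :
    (z • (1 : Matrix (Vo V a b) (Vo V a b) ℂ) - QvoC aV a b) * GvoC aV a b z = 1 :=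
  Matrix.mul_nonsing_inv _ ((Matrix.isUnit_iff_isUnit_det _).mp (isUnit_res aV a b hz))

lemma res_entry (aV : V → V → ℝ) (a b : V) {z : ℂ}
    (hz : z ∉ spectrum ℂ (QvoC aV a b)) (v u : Vo V a b) :
    z * GvoC aV a b z v u - ∑ w : Vo V a b, QvoC aV a b v w * GvoC aV a b z w u
      = if v = u then 1 else 0 := by
  have h := congrArg (fun M => M v u) (res_mul aV a b hz)
  simp only [Matrix.mul_apply, Matrix.sub_apply, Matrix.smul_apply, Matrix.one_apply,
    smul_eq_mul] at h
  rw [← h]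
  simp only [sub_mul]
  rw [Finset.sum_sub_distrib]
  congr 1
  simp [mul_ite, ite_mul, mul_assoc, Finset.sum_ite_eq]

lemma F_id (aV : V → V → ℝ) (a b c : V) {z : ℂ}
    (hz : z ∉ spectrum ℂ (QvoC aV a b)) (v : Vo V a b) :
    z * (∑ u : Vo V a b, GvoC aV a b z v u * ((qof aV u.1 c : ℝ) : ℂ))
      = (∑ u : Vo V a b, ((qof aV v.1 u.1 : ℝ) : ℂ) *
          (∑ w : Vo V a b, GvoC aV a b z u w * ((qof aV w.1 c : ℝ) : ℂ)))
        + ((qof aV v.1 c : ℝ) : ℂ) := by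
  have h1 : ∑ u : Vo V a b, ((qof aV v.1 u.1 : ℝ) : ℂ) *
        (∑ w : Vo V a b, GvoC aV a b z u w * ((qof aV w.1 c : ℝ) : ℂ))
      = ∑ w : Vo V a b, (∑ u : Vo V a b, QvoC aV a b v u * GvoC aV a b z u w) *
          ((qof aV w.1 c : ℝ) : ℂ) := by
    simp only [Finset.mul_sum, Finset.sum_mul, QvoC, Matrix.of_apply, mul_assoc]
    rw [Finset.sum_comm]
  have h2 : z * (∑ u : Vo V a b, GvoC aV a b z v u * ((qof aV u.1 c : ℝ) : ℂ))
      = ∑ w : Vo V a b, (z * GvoC aV a b z v w) * ((qof aV w.1 c : ℝ) : ℂ) := by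
    rw [Finset.mul_sum]
    simp [mul_assoc]
  have h3 : ∑ w : Vo V a b,
        (z * GvoC aV a b z v w - ∑ u : Vo V a b, QvoC aV a b v u * GvoC aV a b z u w) *
          ((qof aV w.1 c : ℝ) : ℂ) = ((qof aV v.1 c : ℝ) : ℂ) := by
    rw [Finset.sum_congr rfl fun w _ => by rw [res_entry aV a b hz v w]]
    simp [ite_mul, Finset.sum_ite_eq]
  rw [h1, h2]
  simp only [sub_mul, Finset.sum_sub_distrib] at h3
  linear_combination h3


/-- Sum over the interior subtype versus the full sum. -/
lemma sumVo {M : Type*} [AddCommGroup M] (a b : V) (hab : a ≠ b) (g : V → M) :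
    ∑ u : Vo V a b, g u.1 = (∑ u, g u) - g a - g b := by
  have hmem : ∀ x : V, x ∈ (Finset.univ \ {a, b} : Finset V) ↔ x ≠ a ∧ x ≠ b := by
    intro x; simp [not_or]
  rw [← Finset.sum_subtype (Finset.univ \ {a, b} : Finset V) hmem g]
  rw [Finset.sum_sdiff_eq_sub (Finset.subset_univ _), Finset.sum_pair hab, sub_add_eq_sub_sub]

/-- The automorphism exchanging `a` and `b`, restricted to the interior. -/
def gammao (a b : V) (γ : Equiv.Perm V) (hγa : γ a = b) (hγb : γ b = a) :
    Vo V a b ≃ Vo V a b :=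
  γ.subtypeEquiv fun v => by
    constructor
    · rintro ⟨h1, h2⟩
      refine ⟨fun h => h2 (γ.injective (h.trans hγb.symm)),
        fun h => h1 (γ.injective (h.trans hγa.symm))⟩
    · rintro ⟨h1, h2⟩
      refine ⟨fun h => h2 (by rw [h, hγa]), fun h => h1 (by rw [h, hγb])⟩

lemma gammao_coe (a b : V) (γ : Equiv.Perm V) (hγa : γ a = b) (hγb : γ b = a)
    (v : Vo V a b) : (gammao a b γ hγa hγb v).1 = γ v.1 := rfl

lemma mV_gamma (aV : V → V → ℝ) (γ : Equiv.Perm V) (hγ : ∀ u v, aV (γ u) (γ v) = aV u v)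
    (u : V) : mVof aV (γ u) = mVof aV u := by
  unfold mVof
  calc ∑ v, aV (γ u) v = ∑ v, aV (γ u) (γ v) := (Equiv.sum_comp γ _).symm
  _ = ∑ v, aV u v := by simp [hγ]

lemma q_gamma (aV : V → V → ℝ) (γ : Equiv.Perm V) (hγ : ∀ u v, aV (γ u) (γ v) = aV u v)
    (u v : V) : qof aV (γ u) (γ v) = qof aV u v := by
  unfold qof; rw [hγ, mV_gamma aV γ hγ]

lemma G_gamma (aV : V → V → ℝ) (a b : V) (γ : Equiv.Perm V)
    (hγ : ∀ u v, aV (γ u) (γ v) = aV u v) (hγa : γ a = b) (hγb : γ b = a)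
    (z : ℂ) (u v : Vo V a b) :
    GvoC aV a b z (gammao a b γ hγa hγb u) (gammao a b γ hγa hγb v)
      = GvoC aV a b z u v := by
  set e := gammao a b γ hγa hγb
  have hQ : (z • (1 : Matrix (Vo V a b) (Vo V a b) ℂ) - QvoC aV a b).submatrix e e
      = z • (1 : Matrix (Vo V a b) (Vo V a b) ℂ) - QvoC aV a b := by
    ext i j
    simp only [Matrix.submatrix_apply, Matrix.sub_apply, Matrix.smul_apply, Matrix.one_apply,
      QvoC, Matrix.of_apply]
    rw [gammao_coe, gammao_coe, q_gamma aV γ hγ]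
    congr 2
    simp [EmbeddingLike.apply_eq_iff_eq, Subtype.ext_iff, e, gammao]
  have : GvoC aV a b z (e u) (e v) = (GvoC aV a b z).submatrix e e u v := rfl
  rw [this]
  unfold GvoC
  rw [← Matrix.inv_submatrix_equiv, hQ]

lemma FVb_gamma (aV : V → V → ℝ) (a b : V) (γ : Equiv.Perm V)
    (hγ : ∀ u v, aV (γ u) (γ v) = aV u v) (hγa : γ a = b) (hγb : γ b = a)
    (z : ℂ) (v : Vo V a b) :
    FVbC aV a b z (gammao a b γ hγa hγb v) = FVaC aV a b z v := by
  set e := gammao a b γ hγa hγb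
  unfold FVbC FVaC
  rw [← Equiv.sum_comp e (fun u => GvoC aV a b z (e v) u * ((qof aV u.1 a : ℝ) : ℂ))]
  refine Finset.sum_congr rfl fun u _ => ?_
  rw [G_gamma aV a b γ hγ hγa hγb, gammao_coe]
  have h : ∀ x : V, qof aV (γ x) a = qof aV x b := fun x => by
    rw [← hγb]; exact q_gamma aV γ hγ x b
  rw [h]

lemma FVa_gamma (aV : V → V → ℝ) (a b : V) (γ : Equiv.Perm V)
    (hγ : ∀ u v, aV (γ u) (γ v) = aV u v) (hγa : γ a = b) (hγb : γ b = a)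
    (z : ℂ) (v : Vo V a b) :
    FVaC aV a b z (gammao a b γ hγa hγb v) = FVbC aV a b z v := by
  set e := gammao a b γ hγa hγb
  unfold FVbC FVaC
  rw [← Equiv.sum_comp e (fun u => GvoC aV a b z (e v) u * ((qof aV u.1 b : ℝ) : ℂ))]
  refine Finset.sum_congr rfl fun u _ => ?_
  rw [G_gamma aV a b γ hγ hγa hγb, gammao_coe]
  have h : ∀ x : V, qof aV (γ x) b = qof aV x a := fun x => by
    rw [← hγa]; exact q_gamma aV γ hγ x a
  rw [h]

lemma theta_a (aV : V → V → ℝ) (a b : V) (z : ℂ) :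
    ∑ u : Vo V a b, ((qof aV a u.1 : ℝ) : ℂ) * FVbC aV a b z u = thetaC aV a b z := by
  unfold thetaC FVbC
  simp [Finset.mul_sum, mul_assoc]

lemma psi_a (aV : V → V → ℝ) (a b : V) (z : ℂ) :
    ∑ u : Vo V a b, ((qof aV a u.1 : ℝ) : ℂ) * FVaC aV a b z u
      = psiC aV a b z - ((qof aV a b : ℝ) : ℂ) := by
  unfold psiC FVaC
  rw [add_sub_cancel_right]
  simp [Finset.mul_sum, mul_assoc]

lemma theta_b (aV : V → V → ℝ) (a b : V) (γ : Equiv.Perm V)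
    (hγ : ∀ u v, aV (γ u) (γ v) = aV u v) (hγa : γ a = b) (hγb : γ b = a) (z : ℂ) :
    ∑ u : Vo V a b, ((qof aV b u.1 : ℝ) : ℂ) * FVaC aV a b z u = thetaC aV a b z := by
  set e := gammao a b γ hγa hγb
  rw [← theta_a aV a b z,
    ← Equiv.sum_comp e (fun u => ((qof aV b u.1 : ℝ) : ℂ) * FVaC aV a b z u)]
  refine Finset.sum_congr rfl fun u _ => ?_
  rw [show FVaC aV a b z (e u) = FVbC aV a b z u from FVa_gamma aV a b γ hγ hγa hγb z u,
    gammao_coe]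
  have h : ∀ x : V, qof aV b (γ x) = qof aV a x := fun x => by
    rw [← hγa]; exact q_gamma aV γ hγ a x
  rw [h]

lemma psi_b (aV : V → V → ℝ) (a b : V) (γ : Equiv.Perm V)
    (hγ : ∀ u v, aV (γ u) (γ v) = aV u v) (hγa : γ a = b) (hγb : γ b = a) (z : ℂ) :
    ∑ u : Vo V a b, ((qof aV b u.1 : ℝ) : ℂ) * FVbC aV a b z u
      = psiC aV a b z - ((qof aV a b : ℝ) : ℂ) := by
  set e := gammao a b γ hγa hγb
  rw [← psi_a aV a b z,
    ← Equiv.sum_comp e (fun u => ((qof aV b u.1 : ℝ) : ℂ) * FVbC aV a b z u)]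
  refine Finset.sum_congr rfl fun u _ => ?_
  rw [show FVbC aV a b z (e u) = FVaC aV a b z u from FVb_gamma aV a b γ hγ hγa hγb z u,
    gammao_coe]
  have h : ∀ x : V, qof aV b (γ x) = qof aV a x := fun x => by
    rw [← hγa]; exact q_gamma aV γ hγ a x
  rw [h]

lemma q_ba (aV : V → V → ℝ) (a b : V) (haVsym : ∀ u v, aV u v = aV v u)
    (γ : Equiv.Perm V) (hγ : ∀ u v, aV (γ u) (γ v) = aV u v) (hγa : γ a = b) :
    qof aV b a = qof aV a b := by
  unfold qof
  rw [haVsym b a, ← hγa, mV_gamma aV γ hγ]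

lemma edge_sum {X : Type*} [Fintype X] [DecidableEq X] {M : Type*} [NonAssocRing M]
    (x x1 x2 : X) (hx : x1 = x → x2 ≠ x) (c : M) (g : X → M) :
    ∑ y, (if (x1 = x ∧ x2 = y) ∨ (x1 = y ∧ x2 = x) then c else 0) * g y
      = c * ((if x1 = x then g x2 else 0) + (if x2 = x then g x1 else 0)) := by
  by_cases h1 : x1 = x
  · have h2 : x2 ≠ x := hx h1
    simp only [h1, eq_self_iff_true, true_and, h2, and_false, or_false, if_true,
      if_false, add_zero]
    have : ∀ y, (if x2 = y then c else 0) * g y = if x2 = y then c * g y else 0 := by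
      intro y; split_ifs <;> simp
    simp only [this, Finset.sum_ite_eq, Finset.mem_univ, if_true]
  · by_cases h2 : x2 = x
    · simp only [h1, h2, if_true, if_false, false_and, true_and, and_true, false_or, zero_add]
      have : ∀ y, (if x1 = y then c else 0) * g y = if x1 = y then c * g y else 0 := by
        intro y; split_ifs <;> simp
      simp only [this, Finset.sum_ite_eq, Finset.mem_univ, if_true]
    · simp [h1, h2]
lemma cstar_inr_sum {X E : Type*} [Fintype X] [Fintype E] [DecidableEq X] [DecidableEq E]
    (ea eb : E → X) (w : E → ℝ) (aV : V → V → ℝ) (a b : V) (e : E) (v : Vo V a b)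
    (h : XVert X E V a b → ℂ) :
    ∑ q, ((cstar ea eb w aV a b (Sum.inr (e, v)) q : ℝ) : ℂ) * h q
      = (w e : ℂ) * (((aV v.1 a : ℝ) : ℂ) * h (Sum.inl (ea e))
          + ((aV v.1 b : ℝ) : ℂ) * h (Sum.inl (eb e))
          + ∑ u : Vo V a b, ((aV v.1 u.1 : ℝ) : ℂ) * h (Sum.inr (e, u))) := by
  rw [Fintype.sum_sum_type]
  have hl : ∑ x : X, ((cstar ea eb w aV a b (Sum.inr (e, v)) (Sum.inl x) : ℝ) : ℂ) *
        h (Sum.inl x)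
      = (w e : ℂ) * (((aV v.1 a : ℝ) : ℂ) * h (Sum.inl (ea e))
          + ((aV v.1 b : ℝ) : ℂ) * h (Sum.inl (eb e))) := by
    simp only [cstar]
    push_cast [apply_ite (fun r : ℝ => (r : ℂ))]
    simp only [mul_add, add_mul, Finset.sum_add_distrib, mul_ite, ite_mul, mul_zero,
      zero_mul, Finset.sum_ite_eq, Finset.mem_univ, if_true]
    ring
  have hr : ∑ p : E × Vo V a b,
        ((cstar ea eb w aV a b (Sum.inr (e, v)) (Sum.inr p) : ℝ) : ℂ) * h (Sum.inr p)
      = (w e : ℂ) * ∑ u : Vo V a b, ((aV v.1 u.1 : ℝ) : ℂ) * h (Sum.inr (e, u)) := by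
    rw [Fintype.sum_prod_type]
    have step : ∀ e' : E, ∑ u : Vo V a b,
          ((cstar ea eb w aV a b (Sum.inr (e, v)) (Sum.inr (e', u)) : ℝ) : ℂ) *
            h (Sum.inr (e', u))
        = if e = e' then
            (w e : ℂ) * ∑ u : Vo V a b, ((aV v.1 u.1 : ℝ) : ℂ) * h (Sum.inr (e, u))
          else 0 := by
      intro e'
      by_cases he : e = e'
      · subst he
        simp only [cstar, if_true, eq_self_iff_true]
        push_cast
        rw [Finset.mul_sum]
        exact Finset.sum_congr rfl fun u _ => by ring
      · simp [cstar, he]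
    rw [Finset.sum_congr rfl fun e' _ => step e', Finset.sum_ite_eq, if_pos (Finset.mem_univ e)]
  rw [hl, hr]
  ring
lemma cstar_inl_sum {X E : Type*} [Fintype X] [Fintype E] [DecidableEq X] [DecidableEq E]
    (ea eb : E → X) (hne : ∀ e, ea e ≠ eb e) (w : E → ℝ) (aV : V → V → ℝ) (a b : V)
    (x : X) (h : XVert X E V a b → ℂ) :
    ∑ q, ((cstar ea eb w aV a b (Sum.inl x) q : ℝ) : ℂ) * h q
      = ∑ e, (w e : ℂ) *
          ((if ea e = x then ((aV a b : ℝ) : ℂ) * h (Sum.inl (eb e))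
              + ∑ u : Vo V a b, ((aV a u.1 : ℝ) : ℂ) * h (Sum.inr (e, u)) else 0)
          + (if eb e = x then ((aV a b : ℝ) : ℂ) * h (Sum.inl (ea e))
              + ∑ u : Vo V a b, ((aV b u.1 : ℝ) : ℂ) * h (Sum.inr (e, u)) else 0)) := by
  rw [Fintype.sum_sum_type]
  have hl : ∑ y : X, ((cstar ea eb w aV a b (Sum.inl x) (Sum.inl y) : ℝ) : ℂ) * h (Sum.inl y)
      = ∑ e, ((w e * aV a b : ℝ) : ℂ) *
          ((if ea e = x then h (Sum.inl (eb e)) else 0)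
            + (if eb e = x then h (Sum.inl (ea e)) else 0)) := by
    simp only [cstar]
    push_cast [apply_ite (fun r : ℝ => (r : ℂ))]
    simp only [Finset.sum_mul]
    rw [Finset.sum_comm]
    refine Finset.sum_congr rfl fun e _ => ?_
    push_cast
    exact edge_sum x (ea e) (eb e) (fun h1 h2 => hne e (h1.trans h2.symm))
      ((w e : ℂ) * ((aV a b : ℝ) : ℂ)) (fun y => h (Sum.inl y))
  have hr : ∑ p : E × Vo V a b,
        ((cstar ea eb w aV a b (Sum.inl x) (Sum.inr p) : ℝ) : ℂ) * h (Sum.inr p)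
      = ∑ e, (w e : ℂ) *
          ((if ea e = x then ∑ u : Vo V a b, ((aV a u.1 : ℝ) : ℂ) * h (Sum.inr (e, u)) else 0)
          + (if eb e = x then ∑ u : Vo V a b, ((aV b u.1 : ℝ) : ℂ) * h (Sum.inr (e, u))
              else 0)) := by
    rw [Fintype.sum_prod_type]
    refine Finset.sum_congr rfl fun e _ => ?_
    simp only [cstar]
    push_cast [apply_ite (fun r : ℝ => (r : ℂ))]
    simp only [mul_add, add_mul, Finset.sum_add_distrib, mul_ite, ite_mul, mul_zero,
      zero_mul, Finset.mul_sum]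
    congr 1 <;> split_ifs <;> simp [Finset.mul_sum, mul_assoc]
  rw [hl, hr, ← Finset.sum_add_distrib]
  refine Finset.sum_congr rfl fun e _ => ?_
  push_cast
  split_ifs <;> ring
lemma mstar_inr_c {X E : Type*} [Fintype X] [Fintype E] [DecidableEq X] [DecidableEq E]
    (ea eb : E → X) (w : E → ℝ) (aV : V → V → ℝ) (a b : V) (hab : a ≠ b)
    (e : E) (v : Vo V a b) :
    ((mstar ea eb w aV a b (Sum.inr (e, v)) : ℝ) : ℂ)
      = (w e : ℂ) * ((mVof aV v.1 : ℝ) : ℂ) := by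
  have h := cstar_inr_sum ea eb w aV a b e v (fun _ => 1)
  simp only [mul_one] at h
  rw [mstar]
  push_cast
  rw [h, sumVo a b hab (fun u => ((aV v.1 u : ℝ) : ℂ)), mVof]
  push_cast
  ring

lemma mstar_inl_c {X E : Type*} [Fintype X] [Fintype E] [DecidableEq X] [DecidableEq E]
    (ea eb : E → X) (hne : ∀ e, ea e ≠ eb e) (w : E → ℝ) (aV : V → V → ℝ)
    (haVsym : ∀ u v, aV u v = aV v u) (haVdiag : ∀ v, aV v v = 0)
    (a b : V) (hab : a ≠ b) (γ : Equiv.Perm V)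
    (hγ : ∀ u v, aV (γ u) (γ v) = aV u v) (hγa : γ a = b)
    (x : X) :
    ((mstar ea eb w aV a b (Sum.inl x) : ℝ) : ℂ)
      = ((mVof aV a : ℝ) : ℂ) *
        ((∑ e, w e * ((if ea e = x then (1 : ℝ) else 0) + (if eb e = x then 1 else 0)) : ℝ)
          : ℂ) := by
  have h := cstar_inl_sum ea eb hne w aV a b x (fun _ => 1)
  simp only [mul_one] at h
  have hmb : mVof aV b = mVof aV a := by rw [← hγa, mV_gamma aV γ hγ]
  have hSa : ∑ u : Vo V a b, ((aV a u.1 : ℝ) : ℂ)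
      = ((mVof aV a : ℝ) : ℂ) - ((aV a b : ℝ) : ℂ) := by
    rw [sumVo a b hab (fun u => ((aV a u : ℝ) : ℂ)), mVof, haVdiag a]
    push_cast
    ring
  have hSb : ∑ u : Vo V a b, ((aV b u.1 : ℝ) : ℂ)
      = ((mVof aV a : ℝ) : ℂ) - ((aV a b : ℝ) : ℂ) := by
    rw [sumVo a b hab (fun u => ((aV b u : ℝ) : ℂ)), haVsym b a, haVdiag b, ← hmb, mVof]
    push_cast
    ring
  rw [mstar]
  push_cast [apply_ite (fun r : ℝ => (r : ℂ))]
  rw [h, Finset.mul_sum]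
  refine Finset.sum_congr rfl fun e _ => ?_
  rw [hSa, hSb]
  split_ifs <;> ring
end
end Stmt15Aux
open Stmt15Aux in
/-- If `λ* ∉ spec(Q_{V°})`, `ψ(λ*) ≠ 0` and `f` is a nonzero `φ(λ*)`-eigenfunction of
`P` on `X`, then `f` extends to a unique `λ*`-eigenfunction of `P_*` on `X[V]`, given
on each substituted copy by
`f*(e,v) = f(eᵃ) F_{V-b}(v,a|λ*) + f(eᵇ) F_{V-a}(v,b|λ*)`. -/
theorem stmt15
    {X E V : Type*} [Fintype X] [Fintype E] [Fintype V]
    [DecidableEq X] [DecidableEq E] [DecidableEq V]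
    (ea eb : E → X) (hne : ∀ e, ea e ≠ eb e)
    (hinc : ∀ x, ∃ e, ea e = x ∨ eb e = x)
    (hXconn : (SimpleGraph.fromRel fun x y => ∃ e, ea e = x ∧ eb e = y).Connected)
    (w : E → ℝ) (hw : ∀ e, 0 < w e)
    (aV : V → V → ℝ) (haVsym : ∀ u v, aV u v = aV v u)
    (haVnn : ∀ u v, 0 ≤ aV u v) (haVdiag : ∀ v, aV v v = 0)
    (hmV : ∀ u, 0 < mVof aV u)
    (hVconn : (SimpleGraph.fromRel fun u v => 0 < aV u v).Connected)
    (a b : V) (hab : a ≠ b)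
    (γ : Equiv.Perm V) (hγ : ∀ u v, aV (γ u) (γ v) = aV u v)
    (hγa : γ a = b) (hγb : γ b = a)
    (z : ℂ) (hz : z ∉ spectrum ℂ (QvoC aV a b))
    (hpsi : psiC aV a b z ≠ 0)
    (f : X → ℂ) (hf0 : f ≠ 0)
    (hf : ∀ x, ∑ y, ((pXof ea eb w x y : ℝ) : ℂ) * f y = phiC aV a b z * f x) :
    (∀ p : XVert X E V a b,
        ∑ q, ((pstar ea eb w aV a b p q : ℝ) : ℂ) * FstarOf ea eb aV a b z f q
          = z * FstarOf ea eb aV a b z f p) ∧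
    (∀ g : XVert X E V a b → ℂ,
        (∀ x, g (Sum.inl x) = f x) →
        (∀ p : XVert X E V a b,
          ∑ q, ((pstar ea eb w aV a b p q : ℝ) : ℂ) * g q = z * g p) →
        g = FstarOf ea eb aV a b z f) := by
  -- abbreviations
  set F := FstarOf ea eb aV a b z f with hF
  -- generic division step
  have hdiv : ∀ (p : XVert X E V a b) (g : XVert X E V a b → ℂ),
      ∑ q, ((pstar ea eb w aV a b p q : ℝ) : ℂ) * g q
        = (∑ q, ((cstar ea eb w aV a b p q : ℝ) : ℂ) * g q)
          / ((mstar ea eb w aV a b p : ℝ) : ℂ) := by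
    intro p g
    rw [Finset.sum_div]
    refine Finset.sum_congr rfl fun q _ => ?_
    rw [pstar]
    push_cast
    ring
  have hq : ∀ u c : V, ((aV u c : ℝ) : ℂ) = ((mVof aV u : ℝ) : ℂ) * ((qof aV u c : ℝ) : ℂ) := by
    intro u c
    rw [← Complex.ofReal_mul]
    congr 1
    rw [qof, mul_comm, div_mul_cancel₀ _ (hmV u).ne']
  have hmb : mVof aV b = mVof aV a := by rw [← hγa, mV_gamma aV γ hγ]
  have hFid_b : ∀ v : Vo V a b, z * FVbC aV a b z v
      = (∑ u : Vo V a b, ((qof aV v.1 u.1 : ℝ) : ℂ) * FVbC aV a b z u)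
        + ((qof aV v.1 a : ℝ) : ℂ) := fun v => F_id aV a b a hz v
  have hFid_a : ∀ v : Vo V a b, z * FVaC aV a b z v
      = (∑ u : Vo V a b, ((qof aV v.1 u.1 : ℝ) : ℂ) * FVaC aV a b z u)
        + ((qof aV v.1 b : ℝ) : ℂ) := fun v => F_id aV a b b hz v
  have hFsuml : ∀ x : X, F (Sum.inl x) = f x := fun x => rfl
  have hFsumr : ∀ (e : E) (u : Vo V a b), F (Sum.inr (e, u))
      = f (ea e) * FVbC aV a b z u + f (eb e) * FVaC aV a b z u := fun e u => rfl
  -- the interior eigenvalue equation, for any boundary data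
  have interior : ∀ (g : XVert X E V a b → ℂ) (e : E) (v : Vo V a b),
      ∑ q, ((cstar ea eb w aV a b (Sum.inr (e, v)) q : ℝ) : ℂ) * g q
        = (w e : ℂ) * (((aV v.1 a : ℝ) : ℂ) * g (Sum.inl (ea e))
            + ((aV v.1 b : ℝ) : ℂ) * g (Sum.inl (eb e))
            + ∑ u : Vo V a b, ((aV v.1 u.1 : ℝ) : ℂ) * g (Sum.inr (e, u))) :=
    fun g e v => cstar_inr_sum ea eb w aV a b e v g
  have hwne : ∀ e, (w e : ℂ) ≠ 0 := fun e => by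
    exact_mod_cast Complex.ofReal_ne_zero.mpr (hw e).ne'
  have hmvne : ∀ u : V, ((mVof aV u : ℝ) : ℂ) ≠ 0 := fun u =>
    Complex.ofReal_ne_zero.mpr (hmV u).ne'
  -- interior case of part 1
  have main_r : ∀ (e : E) (v : Vo V a b),
      ∑ q, ((pstar ea eb w aV a b (Sum.inr (e, v)) q : ℝ) : ℂ) * F q
        = z * F (Sum.inr (e, v)) := by
    intro e v
    rw [hdiv, interior F e v, mstar_inr_c ea eb w aV a b hab e v,
      div_eq_iff (mul_ne_zero (hwne e) (hmvne v.1))]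
    have hsum : ∑ u : Vo V a b, ((aV v.1 u.1 : ℝ) : ℂ) * F (Sum.inr (e, u))
        = ((mVof aV v.1 : ℝ) : ℂ) *
            (f (ea e) * (∑ u : Vo V a b, ((qof aV v.1 u.1 : ℝ) : ℂ) * FVbC aV a b z u)
            + f (eb e) * (∑ u : Vo V a b, ((qof aV v.1 u.1 : ℝ) : ℂ) * FVaC aV a b z u)) := by
      simp only [hFsumr, mul_add, Finset.mul_sum, Finset.sum_add_distrib]
      congr 1 <;> exact Finset.sum_congr rfl fun u _ => by rw [hq v.1 u.1]; ring
    rw [hFsuml, hFsuml, hsum, hFsumr]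
    linear_combination (w e : ℂ) * f (ea e) * hq v.1 a + (w e : ℂ) * f (eb e) * hq v.1 b
      + (w e : ℂ) * ((mVof aV v.1 : ℝ) : ℂ) * f (ea e) * (hFid_b v).symm
      + (w e : ℂ) * ((mVof aV v.1 : ℝ) : ℂ) * f (eb e) * (hFid_a v).symm
  -- positivity of the X-degree
  have hMXpos : ∀ x : X,
      0 < ∑ e, w e * ((if ea e = x then (1 : ℝ) else 0) + (if eb e = x then 1 else 0)) := by
    intro x
    obtain ⟨e0, he0⟩ := hinc x
    refine Finset.sum_pos' (fun e _ => mul_nonneg (hw e).le ?_) ⟨e0, Finset.mem_univ e0, ?_⟩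
    · split_ifs <;> norm_num
    · refine mul_pos (hw e0) ?_
      rcases he0 with h | h <;> simp [h] <;> split_ifs <;> norm_num
  have hMXne : ∀ x : X,
      ((∑ e, w e * ((if ea e = x then (1 : ℝ) else 0) + (if eb e = x then 1 else 0)) : ℝ) : ℂ)
        ≠ 0 := fun x => Complex.ofReal_ne_zero.mpr (hMXpos x).ne'
  have hMXc : ∀ x : X,
      ((∑ e, w e * ((if ea e = x then (1 : ℝ) else 0) + (if eb e = x then 1 else 0)) : ℝ) : ℂ)
        = ∑ e, (w e : ℂ) * ((if ea e = x then (1 : ℂ) else 0) + (if eb e = x then 1 else 0)) := by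
    intro x
    push_cast [apply_ite (fun r : ℝ => (r : ℂ))]
    norm_num
  -- the weighted neighbour sum identity on X
  have hTX : ∀ x : X,
      ∑ e, (w e : ℂ) * ((if ea e = x then f (eb e) else 0) + (if eb e = x then f (ea e) else 0))
        = phiC aV a b z * f x *
          ((∑ e, w e * ((if ea e = x then (1 : ℝ) else 0) + (if eb e = x then 1 else 0)) : ℝ)
            : ℂ) := by
    intro x
    have hA : ∑ y, ((pXof ea eb w x y : ℝ) : ℂ) * f y
        = (∑ y, (((∑ e, if (ea e = x ∧ eb e = y) ∨ (ea e = y ∧ eb e = x) then w e else 0)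
            : ℝ) : ℂ) * f y)
          / ((∑ e, w e * ((if ea e = x then (1 : ℝ) else 0) + (if eb e = x then 1 else 0))
              : ℝ) : ℂ) := by
      rw [Finset.sum_div]
      exact Finset.sum_congr rfl fun y _ => by rw [pXof]; push_cast; ring
    have hB : ∑ y, (((∑ e, if (ea e = x ∧ eb e = y) ∨ (ea e = y ∧ eb e = x) then w e else 0)
            : ℝ) : ℂ) * f y
        = ∑ e, (w e : ℂ) *
            ((if ea e = x then f (eb e) else 0) + (if eb e = x then f (ea e) else 0)) := by
      push_cast [apply_ite (fun r : ℝ => (r : ℂ))]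
      simp only [Finset.sum_mul]
      rw [Finset.sum_comm]
      exact Finset.sum_congr rfl fun e _ =>
        edge_sum x (ea e) (eb e) (fun p q => hne e (p.trans q.symm)) ((w e : ℝ) : ℂ) f
    have h0 := hf x
    rw [hA, hB, div_eq_iff (hMXne x)] at h0
    exact h0
  have hψφ : psiC aV a b z * phiC aV a b z = z - thetaC aV a b z := by
    rw [phiC, mul_comm, div_mul_cancel₀ _ hpsi]
  -- weighted theta/psi sums
  have hEa : ∀ e : E, ∑ u : Vo V a b, ((aV a u.1 : ℝ) : ℂ) *
        (f (ea e) * FVbC aV a b z u + f (eb e) * FVaC aV a b z u)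
      = ((mVof aV a : ℝ) : ℂ) * (f (ea e) * thetaC aV a b z
          + f (eb e) * (psiC aV a b z - ((qof aV a b : ℝ) : ℂ))) := by
    intro e
    rw [← theta_a aV a b z, ← psi_a aV a b z]
    simp only [mul_add, Finset.mul_sum, Finset.sum_add_distrib]
    congr 1 <;> exact Finset.sum_congr rfl fun u _ => by rw [hq a u.1]; ring
  have hEb : ∀ e : E, ∑ u : Vo V a b, ((aV b u.1 : ℝ) : ℂ) *
        (f (ea e) * FVbC aV a b z u + f (eb e) * FVaC aV a b z u)
      = ((mVof aV a : ℝ) : ℂ) * (f (ea e) * (psiC aV a b z - ((qof aV a b : ℝ) : ℂ))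
          + f (eb e) * thetaC aV a b z) := by
    intro e
    rw [← theta_b aV a b γ hγ hγa hγb z, ← psi_b aV a b γ hγ hγa hγb z]
    simp only [mul_add, Finset.mul_sum, Finset.sum_add_distrib]
    congr 1 <;> exact Finset.sum_congr rfl fun u _ => by rw [hq b u.1, hmb]; ring
  -- boundary case of part 1
  have main_l : ∀ x : X,
      ∑ q, ((pstar ea eb w aV a b (Sum.inl x) q : ℝ) : ℂ) * F q = z * F (Sum.inl x) := by
    intro x
    rw [hdiv, cstar_inl_sum ea eb hne w aV a b x F,
      mstar_inl_c ea eb hne w aV haVsym haVdiag a b hab γ hγ hγa x,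
      div_eq_iff (mul_ne_zero (hmvne a) (hMXne x))]
    simp only [hFsuml, hFsumr]
    simp only [hEa, hEb]
    calc ∑ e, (w e : ℂ) *
          ((if ea e = x then ((aV a b : ℝ) : ℂ) * f (eb e)
              + ((mVof aV a : ℝ) : ℂ) * (f (ea e) * thetaC aV a b z
                  + f (eb e) * (psiC aV a b z - ((qof aV a b : ℝ) : ℂ))) else 0)
            + (if eb e = x then ((aV a b : ℝ) : ℂ) * f (ea e)
              + ((mVof aV a : ℝ) : ℂ) * (f (ea e) * (psiC aV a b z - ((qof aV a b : ℝ) : ℂ))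
                  + f (eb e) * thetaC aV a b z) else 0))
        = ((mVof aV a : ℝ) : ℂ) * (thetaC aV a b z * f x *
              ((∑ e, w e * ((if ea e = x then (1 : ℝ) else 0) + (if eb e = x then 1 else 0))
                : ℝ) : ℂ)
            + psiC aV a b z * ∑ e, (w e : ℂ) *
                ((if ea e = x then f (eb e) else 0) + (if eb e = x then f (ea e) else 0))) := by
          rw [hMXc x, Finset.mul_sum, Finset.mul_sum, ← Finset.sum_add_distrib, Finset.mul_sum]
          refine Finset.sum_congr rfl fun e _ => ?_
          by_cases h1 : ea e = x <;> by_cases h2 : eb e = x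
          · exact absurd (h1.trans h2.symm) (hne e)
          · simp only [h1, h2, if_true, if_false, eq_self_iff_true, ite_true, ite_false]
            linear_combination (w e : ℂ) * f (eb e) * hq a b
          · simp only [h1, h2, if_true, if_false, eq_self_iff_true, ite_true, ite_false]
            linear_combination (w e : ℂ) * f (ea e) * hq a b
          · simp only [h1, h2, if_false, ite_false]
            ring
      _ = z * f x * (((mVof aV a : ℝ) : ℂ) *
            ((∑ e, w e * ((if ea e = x then (1 : ℝ) else 0) + (if eb e = x then 1 else 0))
              : ℝ) : ℂ)) := by
          rw [hTX x]
          linear_combination ((mVof aV a : ℝ) : ℂ) * f x *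
            ((∑ e, w e * ((if ea e = x then (1 : ℝ) else 0) + (if eb e = x then 1 else 0))
              : ℝ) : ℂ) * hψφ
  have main : ∀ p : XVert X E V a b,
      ∑ q, ((pstar ea eb w aV a b p q : ℝ) : ℂ) * F q = z * F p := by
    intro p
    rcases p with x | ⟨e, v⟩
    · exact main_l x
    · exact main_r e v
  refine ⟨main, ?_⟩
  intro g hgl hge
  funext p
  rcases p with x | ⟨e, v⟩
  · exact (hgl x).trans rfl
  · -- uniqueness on the copy at edge e
    have hcg : ∀ vv : Vo V a b,
        ∑ q, ((cstar ea eb w aV a b (Sum.inr (e, vv)) q : ℝ) : ℂ) * g q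
          = z * g (Sum.inr (e, vv)) * ((w e : ℂ) * ((mVof aV vv.1 : ℝ) : ℂ)) := by
      intro vv
      have h0 := hge (Sum.inr (e, vv))
      rw [hdiv, mstar_inr_c ea eb w aV a b hab e vv,
        div_eq_iff (mul_ne_zero (hwne e) (hmvne vv.1))] at h0
      exact h0
    have hcF : ∀ vv : Vo V a b,
        ∑ q, ((cstar ea eb w aV a b (Sum.inr (e, vv)) q : ℝ) : ℂ) * F q
          = z * F (Sum.inr (e, vv)) * ((w e : ℂ) * ((mVof aV vv.1 : ℝ) : ℂ)) := by
      intro vv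
      have h0 := main (Sum.inr (e, vv))
      rw [hdiv, mstar_inr_c ea eb w aV a b hab e vv,
        div_eq_iff (mul_ne_zero (hwne e) (hmvne vv.1))] at h0
      exact h0
    have hDiff : ∀ vv : Vo V a b,
        ∑ u : Vo V a b, ((qof aV vv.1 u.1 : ℝ) : ℂ) *
            (g (Sum.inr (e, u)) - F (Sum.inr (e, u)))
          = z * (g (Sum.inr (e, vv)) - F (Sum.inr (e, vv))) := by
      intro vv
      have h1 := hcg vv
      have h2 := hcF vv
      rw [interior g e vv] at h1
      rw [interior F e vv] at h2
      rw [hgl (ea e), hgl (eb e)] at h1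
      rw [hFsuml (ea e), hFsuml (eb e)] at h2
      have hA : (w e : ℂ) *
            ((∑ u : Vo V a b, ((aV vv.1 u.1 : ℝ) : ℂ) * g (Sum.inr (e, u)))
              - ∑ u : Vo V a b, ((aV vv.1 u.1 : ℝ) : ℂ) * F (Sum.inr (e, u)))
          = (w e : ℂ) * (z * ((mVof aV vv.1 : ℝ) : ℂ) *
              (g (Sum.inr (e, vv)) - F (Sum.inr (e, vv)))) := by
        linear_combination h1 - h2
      have hA' := mul_left_cancel₀ (hwne e) hA
      refine mul_left_cancel₀ (hmvne vv.1) ?_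
      calc ((mVof aV vv.1 : ℝ) : ℂ) * ∑ u : Vo V a b, ((qof aV vv.1 u.1 : ℝ) : ℂ) *
              (g (Sum.inr (e, u)) - F (Sum.inr (e, u)))
          = (∑ u : Vo V a b, ((aV vv.1 u.1 : ℝ) : ℂ) * g (Sum.inr (e, u)))
            - ∑ u : Vo V a b, ((aV vv.1 u.1 : ℝ) : ℂ) * F (Sum.inr (e, u)) := by
            rw [Finset.mul_sum, ← Finset.sum_sub_distrib]
            exact Finset.sum_congr rfl fun u _ => by rw [hq vv.1 u.1]; ring
        _ = z * ((mVof aV vv.1 : ℝ) : ℂ) * (g (Sum.inr (e, vv)) - F (Sum.inr (e, vv))) := hA'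
        _ = ((mVof aV vv.1 : ℝ) : ℂ) *
            (z * (g (Sum.inr (e, vv)) - F (Sum.inr (e, vv)))) := by ring
    have hMd : (z • (1 : Matrix (Vo V a b) (Vo V a b) ℂ) - QvoC aV a b).mulVec
        (fun u => g (Sum.inr (e, u)) - F (Sum.inr (e, u))) = 0 := by
      funext vv
      simp only [Matrix.mulVec, dotProduct, Matrix.sub_apply, Matrix.smul_apply,
        Matrix.one_apply, QvoC, Matrix.of_apply, smul_eq_mul, sub_mul,
        Finset.sum_sub_distrib, Pi.zero_apply]
      rw [hDiff vv]
      simp [mul_ite, ite_mul, Finset.sum_ite_eq]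
    have hU := isUnit_res aV a b hz
    have h7 : GvoC aV a b z * (z • (1 : Matrix (Vo V a b) (Vo V a b) ℂ) - QvoC aV a b) = 1 :=
      Matrix.nonsing_inv_mul _ ((Matrix.isUnit_iff_isUnit_det _).mp hU)
    have h6 : (fun u => g (Sum.inr (e, u)) - F (Sum.inr (e, u))) = (0 : Vo V a b → ℂ) := by
      have h8 := congrArg (GvoC aV a b z).mulVec hMd
      rw [Matrix.mulVec_mulVec, h7, Matrix.one_mulVec, Matrix.mulVec_zero] at h8
      exact h8
    have h9 := congrFun h6 v
    simp only [Pi.zero_apply] at h9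
    exact sub_eq_zero.mp h9
end

section
/- Let T_L and U_L denote the Chebyshev polynomials of the first and second kind. For simple random walk Q on the path V = {v_0, ..., v_L} (L ≥ 2) with a = v_0, b = v_L, the first-passage generating function satisfies F_V(a, b | z) = 1/T_L(z), i.e., φ(z) = T_L(z); moreover ψ(z) = 1/U_{L−1}(z), where ψ(z) = Σ_{u,v∈V^o} q(a,u) G_{V^o}(u,v|z) q(v,b) + q(a,b) and G_{V^o} is the resolvent of the restriction of Q to the interior {v_1,...,v_{L−1}}. -/
open Polynomial

noncomputable section

/-- Transition matrix of simple random walk on the path `v_0, …, v_L`. -/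
def pathQ (L : ℕ) : Matrix (Fin (L + 1)) (Fin (L + 1)) ℝ :=
  Matrix.of fun i j =>
    (if (i : ℕ) + 1 = (j : ℕ) ∨ (j : ℕ) + 1 = (i : ℕ) then (1 : ℝ) else 0) /
      (∑ j' : Fin (L + 1), if (i : ℕ) + 1 = (j' : ℕ) ∨ (j' : ℕ) + 1 = (i : ℕ) then (1 : ℝ) else 0)

/-- Interior vertices of the path: `V° = {v_1, …, v_{L-1}}`. -/
abbrev pathVo (L : ℕ) := {i : Fin (L + 1) // i ≠ 0 ∧ i ≠ Fin.last L}

/-- Restriction of the path walk to the interior, as a complex matrix. -/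
def pathQvo (L : ℕ) : Matrix (pathVo L) (pathVo L) ℂ :=
  Matrix.of fun u v => ((pathQ L u.1 v.1 : ℝ) : ℂ)

end

open Matrix

/-!
If `z` is not in the spectrum of `Q`, the last column `c` of `(z - Q)⁻¹` satisfies `z c = Q c`
at every vertex but `v_L`: at `v_0` this reads `c₁ = z c₀`, in the interior it is the Chebyshev
recurrence `c_{k+1} = 2 z c_k - c_{k-1}`, hence `c_L = T_L(z) c₀`.

For `ψ`, the vector `h = G_{V°} q(·, v_L)`, extended to the whole path by `h(v_0) = 0` and
`h(v_L) = 1`, satisfies `z h = Q h` on `V°` (the boundary value at `v_L` accounts for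
`q(·, v_L)`). The same recurrence with `h₀ = 0` gives `h_k = U_{k-1}(z) h₁`, so
`1 = h_L = U_{L-1}(z) h₁`, while `ψ = ∑_j q(v_0, j) h_j = h₁`.
-/
theorem eq_of_two_mul_sub_recurrence {R : Type*} [Ring R] {x : R} {N : ℕ} {a b : ℕ → R}
    (ha : ∀ n, n + 2 ≤ N → a (n + 2) = 2 * x * a (n + 1) - a n)
    (hb : ∀ n, n + 2 ≤ N → b (n + 2) = 2 * x * b (n + 1) - b n)
    (h0 : a 0 = b 0) (h1 : a 1 = b 1) : ∀ n ≤ N, a n = b n := by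
  intro n
  induction n using Nat.strong_induction_on with
  | _ n ih =>
    match n with
    | 0 => exact fun _ => h0
    | 1 => exact fun _ => h1
    | n + 2 =>
      intro hn
      rw [ha n hn, hb n hn, ih n (by omega) (by omega), ih (n + 1) (by omega) (by omega)]

theorem eq_chebyshevT_eval_mul_of_recurrence {R : Type*} [CommRing R] {x : R} {N : ℕ}
    {c : ℕ → R} (hc : ∀ n, n + 2 ≤ N → c (n + 2) = 2 * x * c (n + 1) - c n)
    (h1 : c 1 = x * c 0) : ∀ n ≤ N, c n = (Chebyshev.T R n).eval x * c 0 := by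
  refine eq_of_two_mul_sub_recurrence hc (fun n _ => ?_) (by simp) (by simp [h1])
  push_cast
  rw [Chebyshev.T_add_two]
  simp only [eval_sub, eval_mul, eval_ofNat, eval_X]
  ring

theorem eq_chebyshevU_eval_mul_of_recurrence {R : Type*} [CommRing R] {x : R} {N : ℕ}
    {c : ℕ → R} (hc : ∀ n, n + 2 ≤ N → c (n + 2) = 2 * x * c (n + 1) - c n)
    (h0 : c 0 = 0) : ∀ n ≤ N, c n = (Chebyshev.U R ((n : ℤ) - 1)).eval x * c 1 := by
  refine eq_of_two_mul_sub_recurrence hc (fun n _ => ?_) (by simp [h0]) (by simp)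
  rw [show ((n + 2 : ℕ) : ℤ) - 1 = (n - 1 : ℤ) + 2 by push_cast; ring,
    show ((n + 1 : ℕ) : ℤ) - 1 = (n - 1 : ℤ) + 1 by push_cast; ring, Chebyshev.U_add_two]
  simp only [eval_sub, eval_mul, eval_ofNat, eval_X]
  ring

theorem Matrix.smul_sub_mulVec_inv_mulVec {n R : Type*} [Fintype n] [DecidableEq n]
    [CommRing R] {M : Matrix n n R} {z : R} (hz : z ∉ spectrum R M) (w : n → R) :
    z • ((z • 1 - M)⁻¹ *ᵥ w) - M *ᵥ ((z • 1 - M)⁻¹ *ᵥ w) = w := by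
  rw [spectrum.notMem_iff, Algebra.algebraMap_eq_smul_one, Matrix.isUnit_iff_isUnit_det] at hz
  calc z • ((z • 1 - M)⁻¹ *ᵥ w) - M *ᵥ ((z • 1 - M)⁻¹ *ᵥ w)
      = (z • 1 - M) *ᵥ ((z • 1 - M)⁻¹ *ᵥ w) := by
        rw [sub_mulVec, smul_mulVec, one_mulVec]
    _ = w := by rw [mulVec_mulVec, mul_nonsing_inv _ hz, one_mulVec]

theorem sum_ite_adjacent {M : Type*} [AddCommMonoid M] {L i : ℕ} (hi : i ≤ L) (g : ℕ → M) :
    (∑ j : Fin (L + 1), if i + 1 = (j : ℕ) ∨ (j : ℕ) + 1 = i then g j else 0) =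
      (if i + 1 ≤ L then g (i + 1) else 0) + (if 1 ≤ i then g (i - 1) else 0) := by
  have hsplit : ∀ j : ℕ, (if i + 1 = j ∨ j + 1 = i then g j else 0) =
      (if i + 1 = j then g j else 0) + (if 1 ≤ i ∧ i - 1 = j then g j else 0) := by
    intro j
    split_ifs <;> first | omega | simp
  rw [Fin.sum_univ_eq_sum_range (fun j => if i + 1 = j ∨ j + 1 = i then g j else 0)]
  simp only [hsplit, Finset.sum_add_distrib, Finset.sum_ite_eq, Finset.mem_range]
  by_cases h : 1 ≤ i
  · simp [h, show i - 1 < L + 1 by omega]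
  · simp [h]

theorem pathQ_apply (L : ℕ) (i j : Fin (L + 1)) :
    pathQ L i j = (if (i : ℕ) + 1 = j ∨ (j : ℕ) + 1 = i then 1 else 0) /
      ((if (i : ℕ) + 1 ≤ L then 1 else 0) + (if 1 ≤ (i : ℕ) then 1 else 0)) := by
  have hdeg := sum_ite_adjacent (Nat.lt_succ_iff.mp i.isLt) (fun _ => (1 : ℝ))
  rw [pathQ, Matrix.of_apply, hdeg]

theorem sum_pathQ_mul (L : ℕ) (i : Fin (L + 1)) (g : ℕ → ℂ) :
    ∑ j, (pathQ L i j : ℂ) * g j =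
      ((if (i : ℕ) + 1 ≤ L then g (i + 1) else 0) +
          (if 1 ≤ (i : ℕ) then g (i - 1) else 0)) /
        ((if (i : ℕ) + 1 ≤ L then 1 else 0) + (if 1 ≤ (i : ℕ) then 1 else 0)) := by
  simp only [pathQ_apply, Complex.ofReal_div, Complex.ofReal_add, apply_ite Complex.ofReal,
    Complex.ofReal_one, Complex.ofReal_zero, div_mul_eq_mul_div, ite_mul, one_mul, zero_mul,
    ← Finset.sum_div]
  rw [sum_ite_adjacent (Nat.lt_succ_iff.mp i.isLt)]

theorem sum_pathQ_zero_mul {L : ℕ} (hL : 1 ≤ L) (g : ℕ → ℂ) :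
    ∑ j, (pathQ L 0 j : ℂ) * g j = g 1 := by
  simp [sum_pathQ_mul, hL]

theorem sum_pathQ_mul_of_interior {L : ℕ} {i : Fin (L + 1)} (h1 : 1 ≤ (i : ℕ))
    (h2 : (i : ℕ) + 1 ≤ L) (g : ℕ → ℂ) :
    ∑ j, (pathQ L i j : ℂ) * g j = (g (i + 1) + g (i - 1)) / 2 := by
  rw [sum_pathQ_mul, if_pos h1, if_pos h2, if_pos h1, if_pos h2]
  norm_num

theorem two_mul_sub_recurrence_of_sum_pathQ_mul {L : ℕ} {z : ℂ} {c : ℕ → ℂ}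
    (hc : ∀ i : Fin (L + 1), 1 ≤ (i : ℕ) → (i : ℕ) + 1 ≤ L →
      z * c i = ∑ j, (pathQ L i j : ℂ) * c j) :
    ∀ n, n + 2 ≤ L → c (n + 2) = 2 * z * c (n + 1) - c n := by
  intro n hn
  have h := hc ⟨n + 1, by omega⟩ le_add_self hn
  rw [sum_pathQ_mul_of_interior le_add_self hn] at h
  simp only [Nat.add_sub_cancel] at h
  linear_combination (-2 : ℂ) * h

theorem pathQ_resolvent_last_last_eq_chebyshevT_mul {L : ℕ} (hL : 1 ≤ L) {z : ℂ}
    (hz : z ∉ spectrum ℂ ((pathQ L).map Complex.ofReal)) :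
    (z • 1 - (pathQ L).map Complex.ofReal)⁻¹ (Fin.last L) (Fin.last L) =
      (Chebyshev.T ℂ L).eval z *
        (z • 1 - (pathQ L).map Complex.ofReal)⁻¹ 0 (Fin.last L) := by
  set G := (z • 1 - (pathQ L).map Complex.ofReal)⁻¹
  set c : ℕ → ℂ := fun k => G (Fin.ofNat (L + 1) k) (Fin.last L) with hc
  have hrow : ∀ i : Fin (L + 1), i ≠ Fin.last L →
      z * c i = ∑ j, (pathQ L i j : ℂ) * c j := by
    intro i hi
    have h := congrFun (smul_sub_mulVec_inv_mulVec hz (Pi.single (Fin.last L) 1)) i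
    simp only [mulVec_single_one] at h
    simp only [Pi.sub_apply, Pi.smul_apply, smul_eq_mul, col_apply, mulVec, dotProduct, map_apply,
      Pi.single_eq_of_ne hi, hc, Fin.ofNat_eq_cast, Fin.cast_val_eq_self] at h ⊢
    linear_combination h
  have h1 : c 1 = z * c 0 := by
    have h := hrow 0 (by simp [Fin.ext_iff]; omega)
    rwa [sum_pathQ_zero_mul hL, Fin.val_zero, eq_comm] at h
  have hT := eq_chebyshevT_eval_mul_of_recurrence
    (two_mul_sub_recurrence_of_sum_pathQ_mul fun i _ hi => hrow i (by simp [Fin.ext_iff]; omega))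
    h1 L le_rfl
  simpa [hc] using hT

noncomputable def extendBoundary (L : ℕ) (d : pathVo L → ℂ) : ℕ → ℂ :=
  Function.extend (fun u : pathVo L => (u.1 : ℕ)) d fun k => if k = L then 1 else 0

theorem extendBoundary_apply_val {L : ℕ} (d : pathVo L → ℂ) (u : pathVo L) :
    extendBoundary L d u.1 = d u :=
  (Fin.val_injective.comp Subtype.val_injective).extend_apply d _ u

theorem extendBoundary_apply_of_forall_ne {L : ℕ} (d : pathVo L → ℂ) {k : ℕ}
    (hk : ∀ u : pathVo L, (u.1 : ℕ) ≠ k) : extendBoundary L d k = if k = L then 1 else 0 :=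
  Function.extend_apply' _ _ _ fun ⟨u, hu⟩ => hk u hu

theorem extendBoundary_zero {L : ℕ} (hL : 1 ≤ L) (d : pathVo L → ℂ) :
    extendBoundary L d 0 = 0 := by
  rw [extendBoundary_apply_of_forall_ne d fun u hu => u.2.1 (Fin.ext (by simpa using hu)),
    if_neg (by omega)]

theorem extendBoundary_self {L : ℕ} (d : pathVo L → ℂ) : extendBoundary L d L = 1 := by
  rw [extendBoundary_apply_of_forall_ne d fun u hu => u.2.2 (Fin.ext (by simpa using hu)),
    if_pos rfl]

theorem sum_mul_extendBoundary {L : ℕ} (d : pathVo L → ℂ) (F : Fin (L + 1) → ℂ) :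
    ∑ j, F j * extendBoundary L d j = ∑ u : pathVo L, F u.1 * d u + F (Fin.last L) := by
  rw [← Fintype.sum_subtype_add_sum_subtype (fun j => j ≠ 0 ∧ j ≠ Fin.last L)]
  congr 1
  · exact Finset.sum_congr rfl fun u _ => by rw [extendBoundary_apply_val]
  · have hval : ∀ j : {j : Fin (L + 1) // ¬(j ≠ 0 ∧ j ≠ Fin.last L)},
        extendBoundary L d j.1 = if j.1 = Fin.last L then 1 else 0 := by
      intro j
      rw [extendBoundary_apply_of_forall_ne d fun u hu => j.2 (by rw [← Fin.ext hu]; exact u.2)]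
      simp [Fin.ext_iff]
    simp only [hval, mul_ite, mul_one, mul_zero]
    rw [Finset.sum_eq_single ⟨Fin.last L, by simp⟩
      (fun j _ hj => if_neg fun h => hj (Subtype.ext h)) (by simp), if_pos rfl]

theorem pathQvo_psi_mul_chebyshevU_eq_one {L : ℕ} (hL : 1 ≤ L) {z : ℂ}
    (hz : z ∉ spectrum ℂ (pathQvo L)) :
    ((∑ u : pathVo L, ∑ v : pathVo L,
        ((pathQ L 0 u.1 : ℝ) : ℂ) * (z • 1 - pathQvo L)⁻¹ u v *
          ((pathQ L v.1 (Fin.last L) : ℝ) : ℂ)) + ((pathQ L 0 (Fin.last L) : ℝ) : ℂ)) *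
      (Chebyshev.U ℂ ((L : ℤ) - 1)).eval z = 1 := by
  set w : pathVo L → ℂ := fun v => pathQ L v.1 (Fin.last L)
  set d := (z • 1 - pathQvo L)⁻¹ *ᵥ w with hd
  set h := extendBoundary L d
  have hrow : ∀ i : Fin (L + 1), 1 ≤ (i : ℕ) → (i : ℕ) + 1 ≤ L →
      z * h i = ∑ j, (pathQ L i j : ℂ) * h j := by
    intro i h1 h2
    let v : pathVo L :=
      ⟨i, by rw [Ne, Fin.ext_iff, Fin.val_zero]; omega,
        by rw [Ne, Fin.ext_iff, Fin.val_last]; omega⟩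
    have hv := congrFun (smul_sub_mulVec_inv_mulVec hz w) v
    rw [← hd] at hv
    rw [sum_mul_extendBoundary, show h i = _ from extendBoundary_apply_val _ v]
    simp only [Pi.sub_apply, Pi.smul_apply, smul_eq_mul, mulVec, dotProduct, pathQvo, of_apply,
      w] at hv
    linear_combination hv
  have hU := eq_chebyshevU_eval_mul_of_recurrence (two_mul_sub_recurrence_of_sum_pathQ_mul hrow)
    (extendBoundary_zero hL _) L le_rfl
  rw [show h L = 1 from extendBoundary_self _] at hU
  calc _ = h 1 * (Chebyshev.U ℂ ((L : ℤ) - 1)).eval z := by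
        rw [← sum_pathQ_zero_mul hL h, sum_mul_extendBoundary]
        simp only [hd, w, mulVec, dotProduct, Finset.mul_sum, mul_assoc]
    _ = 1 := by rw [mul_comm, ← hU]

/-- For SRW `Q` on the path of length `L ≥ 2` with `a = v_0`, `b = v_L`:
`φ(z) = 1/F_V(a,b|z) = T_L(z)`, i.e. `G(b,b|z) = T_L(z) · G(a,b|z)`, and
`ψ(z) = 1/U_{L-1}(z)`, i.e. `ψ(z) · U_{L-1}(z) = 1`, where `T_L, U_{L-1}` are the
Chebyshev polynomials of the first and second kind. -/
theorem stmt16 (L : ℕ) (hL : 2 ≤ L) (z : ℂ) :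
    (z ∉ spectrum ℂ ((pathQ L).map Complex.ofReal) →
      ((z • (1 : Matrix (Fin (L + 1)) (Fin (L + 1)) ℂ) -
          (pathQ L).map Complex.ofReal)⁻¹) (Fin.last L) (Fin.last L)
        = (Polynomial.Chebyshev.T ℂ L).eval z *
          ((z • (1 : Matrix (Fin (L + 1)) (Fin (L + 1)) ℂ) -
            (pathQ L).map Complex.ofReal)⁻¹) 0 (Fin.last L)) ∧
    (z ∉ spectrum ℂ (pathQvo L) →
      ((∑ u : pathVo L, ∑ v : pathVo L,
          ((pathQ L 0 u.1 : ℝ) : ℂ) *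
            ((z • (1 : Matrix (pathVo L) (pathVo L) ℂ) - pathQvo L)⁻¹) u v *
            ((pathQ L v.1 (Fin.last L) : ℝ) : ℂ))
        + ((pathQ L 0 (Fin.last L) : ℝ) : ℂ)) *
        (Polynomial.Chebyshev.U ℂ (L - 1)).eval z = 1) :=
  ⟨pathQ_resolvent_last_last_eq_chebyshevT_mul (by omega),
    pathQvo_psi_mul_chebyshevU_eq_one (by omega)⟩
end
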